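/- arXiv:1510.01613 — 9 statements merged into one kernel-verified Lean document; each statement's English description precedes it below -/
import Mathlib

section
/- Let G be a Polish group. Then the Haar meager subsets of G form a σ-ideal: every subset of a Haar meager set is Haar meager, and the union of countably many Haar meager sets is Haar meager. -/
/-!
Heredity is immediate. For a union, let `fₙ : Kₙ → G` witness that `Bₙ` is Haar meager.
Shrinking `Kₙ` to the closure of a small open set and translating `fₙ` by a constant `cₙ⁻¹`,
one makes the infinite product `F x = ∏ₙ cₙ⁻¹ fₙ(xₙ)` converge uniformly on `∏ₙ Kₙ`: the
`n`-th factor is chosen so close to `1` that it moves each point of the compact set of possible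
`n`-th partial products by at most `2⁻ⁿ`. With all coordinates but the `n`-th frozen, `F` reads
`y ↦ a * cₙ⁻¹ fₙ(y) * b`, so every such section of `F⁻¹' (g Bₙ h)` is meager, and by the
Kuratowski–Ulam theorem so is `F⁻¹' (g Bₙ h)`.
-/

/-- A set `A` in a Polish group `G` is *Haar meager* if there are a Borel set `B ⊇ A`,
a nonempty compact metrizable space `K` and a continuous map `f : K → G` such that
`f ⁻¹' (g • B • h)` is meager in `K` for all `g, h ∈ G`. -/
def IsHaarMeager {G : Type*} [Group G] [TopologicalSpace G] (A : Set G) : Prop :=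
  ∃ B : Set G, A ⊆ B ∧ @MeasurableSet G (borel G) B ∧
    ∃ (K : Type) (tK : TopologicalSpace K),
      @CompactSpace K tK ∧ @TopologicalSpace.MetrizableSpace K tK ∧ Nonempty K ∧
      ∃ f : K → G, @Continuous K G tK _ f ∧
        ∀ g h : G, @IsMeagre K tK (f ⁻¹' ((fun b => g * b * h) '' B))

open Topology Filter Set Function TopologicalSpace Pointwise

instance {X : Type*} [TopologicalSpace X] [CompactSpace X] (s : Set X) :
    CompactSpace (closure s) :=
  isCompact_iff_compactSpace.1 isClosed_closure.isCompact

section Meagre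

variable {X Y : Type*} [TopologicalSpace X] [TopologicalSpace Y]

lemma IsMeagre.preimage_val_closure {U : Set X} (hU : IsOpen U) {M : Set X} (hM : IsMeagre M) :
    IsMeagre (((↑) : closure U → X) ⁻¹' M) := by
  have hMU : IsMeagre (inclusion subset_closure '' (((↑) : U → X) ⁻¹' M)) :=
    (IsEmbedding.inclusion subset_closure).isInducing.isMeagre_image
      (hM.preimage_of_isOpenMap continuous_subtype_val hU.isOpenMap_subtype_val)
  have hrest : IsNowhereDense {x : closure U | (x : X) ∉ U} := by
    refine (hU.isClosed_compl.preimage continuous_subtype_val).isNowhereDense_iff.2 ?_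
    rw [interior_eq_empty_iff_dense_compl, Subtype.dense_iff]
    refine closure_mono fun x hx => ⟨⟨x, subset_closure hx⟩, not_not.2 hx, rfl⟩
  refine (hMU.union hrest.isMeagre).mono fun x hx => ?_
  by_cases h : (x : X) ∈ U
  · exact Or.inl ⟨⟨x, h⟩, hx, rfl⟩
  · exact Or.inr h

lemma IsOpen.eventually_residual_dense_prodMk_preimage [SecondCountableTopology Y]
    {W : Set (X × Y)} (hWo : IsOpen W) (hWd : Dense W) :
    ∀ᶠ x in residual X, Dense {y | (x, y) ∈ W} := by
  have hc : {V ∈ countableBasis Y | V.Nonempty}.Countable :=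
    (countable_countableBasis Y).mono (sep_subset _ _)
  have hV : ∀ V ∈ {V ∈ countableBasis Y | V.Nonempty}, ∀ᶠ x in residual X,
      x ∈ Prod.fst '' (W ∩ Prod.snd ⁻¹' V) := by
    rintro V ⟨hV, hVne⟩
    have hVo := isOpen_of_mem_countableBasis hV
    refine residual_of_dense_open (isOpenMap_fst _ (hWo.inter (hVo.preimage continuous_snd))) ?_
    refine dense_iff_inter_open.2 fun O hO hOne => ?_
    obtain ⟨p, ⟨hpO, hpV⟩, hpW⟩ := hWd.inter_open_nonempty _ (hO.prod hVo) (hOne.prod hVne)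
    exact ⟨p.1, hpO, p, ⟨hpW, hpV⟩, rfl⟩
  filter_upwards [(eventually_countable_ball hc).2 hV] with x hx
  refine (isBasis_countableBasis Y).dense_iff.2 fun V hV hVne => ?_
  obtain ⟨p, ⟨hpW, hpV⟩, rfl⟩ := hx V ⟨hV, hVne⟩
  exact ⟨p.2, hpV, hpW⟩

/-- The easy half of the Kuratowski–Ulam theorem. -/
lemma eventually_residual_of_eventually_residual_prod [SecondCountableTopology Y]
    {P : X × Y → Prop} (h : ∀ᶠ p in residual (X × Y), P p) :
    ∀ᶠ x in residual X, ∀ᶠ y in residual Y, P (x, y) := by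
  obtain ⟨S, hSo, hSd, hSc, hS⟩ := mem_residual_iff.1 h
  filter_upwards [(eventually_countable_ball hSc).2 fun W hW =>
    (hSo W hW).eventually_residual_dense_prodMk_preimage (hSd W hW)] with x hx
  have hsec : ∀ W ∈ S, ∀ᶠ y in residual Y, (x, y) ∈ W := fun W hW =>
    residual_of_dense_open ((hSo W hW).preimage (Continuous.prodMk_right x)) (hx W hW)
  filter_upwards [(eventually_countable_ball hSc).2 hsec] with y hy
  exact hS hy

/-- The Kuratowski–Ulam theorem. -/
lemma BaireMeasurableSet.isMeagre_of_forall_isMeagre_prodMk_preimage [SecondCountableTopology Y]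
    [BaireSpace X] [BaireSpace Y] {S : Set (X × Y)} (hS : BaireMeasurableSet S)
    (h : ∀ x, IsMeagre {y | (x, y) ∈ S}) : IsMeagre S := by
  obtain ⟨U, hUo, hSU⟩ := hS.residualEq_isOpen
  have hU : U = ∅ := by
    by_contra hne
    obtain ⟨⟨x₀, y₀⟩, hp⟩ := nonempty_iff_ne_empty.2 hne
    obtain ⟨O, V, hO, hV, hx₀, hy₀, hOV⟩ := isOpen_prod_iff.1 hUo x₀ y₀ hp
    have hsec : ∀ᶠ x in residual X, ∀ᶠ y in residual Y, (x, y) ∉ U := by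
      filter_upwards [eventually_residual_of_eventually_residual_prod hSU] with x hx
      filter_upwards [hx, h x] with y hSUy hy
      exact fun hxU => hy (hSUy.mpr hxU)
    obtain ⟨x, hxO, hx⟩ := (dense_of_mem_residual hsec).inter_open_nonempty O hO ⟨x₀, hx₀⟩
    exact not_isMeagre_of_isOpen hV ⟨y₀, hy₀⟩
      (mem_of_superset hx fun y hy hyV => hy (hOV ⟨hxO, hyV⟩))
  subst hU
  filter_upwards [hSU] with p hp hpS
  exact hp.mp hpS

lemma BaireMeasurableSet.isMeagre_of_forall_isMeagre_update {ι : Type*} [DecidableEq ι]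
    {L : ι → Type*} [∀ i, TopologicalSpace (L i)] [∀ i, CompactSpace (L i)] [∀ i, T2Space (L i)]
    (n : ι) [SecondCountableTopology (L n)] {S : Set (∀ i, L i)} (hS : BaireMeasurableSet S)
    (h : ∀ x, IsMeagre {y | update x n y ∈ S}) : IsMeagre S := by
  let e := (Homeomorph.piSplitAt n L).trans (Homeomorph.prodComm _ _)
  have he : ∀ r y y', e.symm (r, y) = update (e.symm (r, y')) n y := by
    intro r y y'
    funext i
    by_cases hi : i = n
    · subst hi
      simp [e]
    · simp [e, hi]
  have hS' : IsMeagre (e.symm ⁻¹' S) := by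
    refine (hS.preimage e.symm.continuous
      e.symm.isOpenMap).isMeagre_of_forall_isMeagre_prodMk_preimage fun r => ?_
    rcases isEmpty_or_nonempty (L n) with hL | ⟨⟨y'⟩⟩
    · exact IsMeagre.empty.mono fun y _ => isEmptyElim y
    · refine (h (e.symm (r, y'))).mono fun y hy => ?_
      rwa [mem_ofPred_eq, ← he]
  simpa [preimage_preimage] using hS'.preimage_of_isOpenMap e.continuous e.isOpenMap

lemma Continuous.baireMeasurableSet_preimage {f : X → Y} (hf : Continuous f) {s : Set Y}
    (hs : @MeasurableSet Y (borel Y) s) : BaireMeasurableSet (f ⁻¹' s) := by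
  borelize X Y
  exact (hf.measurable hs).baireMeasurableSet

end Meagre

section Witness

variable {G K : Type*} [Group G] [TopologicalSpace K]

def IsHaarMeagerWitness (f : K → G) (B : Set G) : Prop :=
  ∀ g h : G, IsMeagre (f ⁻¹' ((fun b => g * b * h) '' B))

lemma image_mul_mul_eq_preimage (g h : G) (B : Set G) :
    (fun b => g * b * h) '' B = (fun w => g⁻¹ * w * h⁻¹) ⁻¹' B :=
  congrFun (image_eq_preimage_of_inverse (f := fun b => g * b * h) (g := fun w => g⁻¹ * w * h⁻¹)
    (fun b => by group) (fun w => by group)) B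

lemma isHaarMeagerWitness_iff {f : K → G} {B : Set G} :
    IsHaarMeagerWitness f B ↔ ∀ g h : G, IsMeagre {x | g * f x * h ∈ B} := by
  simp only [IsHaarMeagerWitness, image_mul_mul_eq_preimage]
  refine ⟨fun H g h => ?_, fun H g h => H _ _⟩
  have := H g⁻¹ h⁻¹
  rwa [inv_inv, inv_inv] at this

lemma IsHaarMeagerWitness.const_mul {f : K → G} {B : Set G} (hf : IsHaarMeagerWitness f B)
    (a : G) : IsHaarMeagerWitness (fun x => a * f x) B :=
  isHaarMeagerWitness_iff.2 fun g h => by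
    simpa only [mul_assoc] using isHaarMeagerWitness_iff.1 hf (g * a) h

lemma IsHaarMeagerWitness.comp_val_closure {f : K → G} {B : Set G} (hf : IsHaarMeagerWitness f B)
    {U : Set K} (hU : IsOpen U) : IsHaarMeagerWitness (fun x : closure U => f x) B :=
  fun g h => (hf g h).preimage_val_closure hU

lemma isHaarMeagerWitness_iUnion {ι : Type*} [Countable ι] {f : K → G} {B : ι → Set G}
    (hB : ∀ i, IsHaarMeagerWitness f (B i)) : IsHaarMeagerWitness f (⋃ i, B i) := fun g h => by
  rw [image_iUnion, preimage_iUnion]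
  exact isMeagre_iUnion fun i => hB i g h

end Witness

section InfiniteProduct

variable {G : Type*} [Group G] {L : ℕ → Type*} (φ : ∀ n, L n → G)

def partialProd : ℕ → (∀ n, L n) → G
  | 0, _ => 1
  | k + 1, x => partialProd k x * φ k (x k)

variable {φ}

lemma partialProd_congr {k : ℕ} {x y : ∀ n, L n} (h : ∀ m < k, x m = y m) :
    partialProd φ k x = partialProd φ k y := by
  induction k with
  | zero => rfl
  | succ k ih => rw [partialProd, partialProd, ih fun m hm => h m (by omega), h k k.lt_succ_self]

lemma inv_partialProd_mul_partialProd_congr {j : ℕ} {x y : ∀ n, L n}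
    (h : ∀ m, j ≤ m → x m = y m) (l : ℕ) :
    (partialProd φ j x)⁻¹ * partialProd φ (j + l) x
      = (partialProd φ j y)⁻¹ * partialProd φ (j + l) y := by
  induction l with
  | zero => simp
  | succ l ih =>
    rw [← add_assoc, partialProd, partialProd, ← mul_assoc, ← mul_assoc, ih, h _ (by omega)]

lemma continuous_partialProd [TopologicalSpace G] [ContinuousMul G] [∀ n, TopologicalSpace (L n)]
    (hφ : ∀ n, Continuous (φ n)) (k : ℕ) : Continuous (partialProd φ k) := by
  induction k with
  | zero => exact continuous_const
  | succ k ih => exact ih.mul ((hφ k).comp (continuous_apply k))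

section Limit

variable [TopologicalSpace G] [ContinuousMul G] [T2Space G] {F : (∀ n, L n) → G}

lemma inv_partialProd_mul_eq_of_tendsto
    (hF : ∀ x, Tendsto (fun k => partialProd φ k x) atTop (𝓝 (F x))) {j : ℕ} {x y : ∀ n, L n}
    (h : ∀ m, j ≤ m → x m = y m) :
    (partialProd φ j x)⁻¹ * F x = (partialProd φ j y)⁻¹ * F y := by
  have hj : ∀ z, Tendsto (fun l => (partialProd φ j z)⁻¹ * partialProd φ (j + l) z) atTop
      (𝓝 ((partialProd φ j z)⁻¹ * F z)) := fun z =>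
    ((hF z).comp ((tendsto_add_atTop_nat j).congr fun l => add_comm l j)).const_mul _
  exact tendsto_nhds_unique ((hj x).congr (inv_partialProd_mul_partialProd_congr h)) (hj y)

lemma apply_update_eq_of_tendsto
    (hF : ∀ x, Tendsto (fun k => partialProd φ k x) atTop (𝓝 (F x))) (x : ∀ n, L n) (n : ℕ)
    (y : L n) :
    F (update x n y) = partialProd φ n x * φ n y * ((partialProd φ (n + 1) x)⁻¹ * F x) := by
  calc F (update x n y)
      = partialProd φ (n + 1) (update x n y) *
          ((partialProd φ (n + 1) (update x n y))⁻¹ * F (update x n y)) := by group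
    _ = _ := by
      rw [inv_partialProd_mul_eq_of_tendsto hF (y := x) fun m hm => update_of_ne (by omega) _ _,
        partialProd, update_self, partialProd_congr fun m hm => update_of_ne (by omega) _ _]

end Limit

lemma exists_continuous_tendsto_of_dist_le_geometric {X α : Type*} [TopologicalSpace X]
    [PseudoMetricSpace α] [CompleteSpace α] {u : ℕ → X → α} (hu : ∀ k, Continuous (u k))
    (h : ∀ k x, dist (u k x) (u (k + 1) x) ≤ (1 / 2) ^ k) :
    ∃ F : X → α, Continuous F ∧ ∀ x, Tendsto (fun k => u k x) atTop (𝓝 (F x)) := by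
  have h' : ∀ x k, dist (u k x) (u (k + 1) x) ≤ 1 * (1 / 2) ^ k := fun x k => by simpa using h k x
  choose F hF using fun x =>
    cauchySeq_tendsto_of_complete (cauchySeq_of_le_geometric (1 / 2) 1 (by norm_num) (h' x))
  refine ⟨F, TendstoUniformly.continuous ?_ (Frequently.of_forall (f := atTop) hu), hF⟩
  refine Metric.tendstoUniformly_iff.2 fun ε hε => ?_
  have hlim : Tendsto (fun k : ℕ => 1 * (1 / 2 : ℝ) ^ k / (1 - 1 / 2)) atTop (𝓝 0) := by
    simpa using ((tendsto_pow_atTop_nhds_zero_of_lt_one (r := (1 / 2 : ℝ)) (by norm_num)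
      (by norm_num)).const_mul 1).div_const (1 - 1 / 2)
  filter_upwards [hlim.eventually (gt_mem_nhds hε)] with k hk x
  rw [dist_comm]
  exact (dist_le_of_le_geometric_of_tendsto (1 / 2) 1 (by norm_num) (h' x) (hF x) k).trans_lt hk

end InfiniteProduct

section Construction

variable {G : Type*} [Group G] [PseudoMetricSpace G] [ContinuousMul G]

lemma IsCompact.eventually_forall_dist_mul_lt {D : Set G} (hD : IsCompact D) {ε : ℝ}
    (hε : 0 < ε) :
    ∀ᶠ w in 𝓝 (1 : G), ∀ a ∈ D, dist (a * w) a < ε := by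
  refine hD.eventually_forall_of_forall_eventually fun a _ => ?_
  have hcont : Continuous fun p : G × G => dist (p.2 * p.1) p.2 := by fun_prop
  exact hcont.continuousAt.eventually_lt continuousAt_const (by simpa using hε)

lemma exists_isOpen_forall_dist_mul_le {K : Type*} [TopologicalSpace K] {f : K → G}
    (hf : Continuous f) (p : K) {D : Set G} (hD : IsCompact D) {ε : ℝ} (hε : 0 < ε) :
    ∃ U : Set K, IsOpen U ∧ p ∈ U ∧
      ∀ a ∈ D, ∀ x ∈ closure U, dist (a * ((f p)⁻¹ * f x)) a ≤ ε := by
  set V := {w : G | ∀ a ∈ D, dist (a * w) a ≤ ε}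
  have hVc : IsClosed V := by
    simp only [V, ofPred_forall]
    exact isClosed_biInter fun a _ => isClosed_le (by fun_prop) continuous_const
  have hV : V ∈ 𝓝 1 := (hD.eventually_forall_dist_mul_lt hε).mono fun w hw a ha => (hw a ha).le
  have hψ : Continuous fun x => (f p)⁻¹ * f x := by fun_prop
  refine ⟨interior ((fun x => (f p)⁻¹ * f x) ⁻¹' V), isOpen_interior, ?_, fun a ha x hx => ?_⟩
  · exact mem_interior_iff_mem_nhds.2 (hψ.continuousAt.preimage_mem_nhds (by simpa using hV))
  · exact closure_minimal interior_subset (hVc.preimage hψ) hx a ha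

lemma exists_isOpen_dist_partialProd_le {K : ℕ → Type*} [∀ n, TopologicalSpace (K n)]
    [∀ n, CompactSpace (K n)] [∀ n, Nonempty (K n)] {f : ∀ n, K n → G}
    (hf : ∀ n, Continuous (f n)) :
    ∃ (U : ∀ n, Set (K n)) (c : ℕ → G), (∀ n, IsOpen (U n) ∧ (U n).Nonempty) ∧
      ∀ k (x : ∀ n, closure (U n)),
        dist (partialProd (fun n (y : closure (U n)) => (c n)⁻¹ * f n y) k x)
          (partialProd (fun n (y : closure (U n)) => (c n)⁻¹ * f n y) (k + 1) x)
          ≤ (1 / 2) ^ k := by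
  let p n : K n := Classical.arbitrary (K n)
  choose U hUo hpU hU using fun n (D : Compacts G) =>
    exists_isOpen_forall_dist_mul_le (hf n) (p n) D.isCompact (ε := (1 / 2) ^ n) (by positivity)
  let S n (D : Compacts G) : Set G := (fun y => (f n (p n))⁻¹ * f n y) '' closure (U n D)
  have hS n D : IsCompact (S n D) := isClosed_closure.isCompact.image (by fun_prop)
  obtain ⟨D, hD0, hDsucc⟩ : ∃ D : ℕ → Compacts G,
      (D 0 : Set G) = {1} ∧ ∀ k, (D (k + 1) : Set G) = (D k : Set G) * S k (D k) :=
    ⟨fun k => Nat.rec ⟨{1}, isCompact_singleton⟩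
      (fun k Dk => ⟨(Dk : Set G) * S k Dk, Dk.isCompact.mul (hS k Dk)⟩) k, rfl, fun _ => rfl⟩
  refine ⟨fun n => U n (D n), fun n => f n (p n), fun n => ⟨hUo n _, p n, hpU n _⟩, fun k x => ?_⟩
  have hmem : ∀ k, partialProd (fun n (y : closure (U n (D n))) => (f n (p n))⁻¹ * f n y) k x
      ∈ D k := by
    intro k
    induction k with
    | zero => simp [partialProd, ← SetLike.mem_coe, hD0]
    | succ k ih =>
      rw [← SetLike.mem_coe, hDsucc]
      exact mul_mem_mul ih (mem_image_of_mem _ (x k).2)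
  rw [dist_comm]
  exact hU k (D k) _ (hmem k) _ (x k).2

end Construction

theorem exists_isHaarMeagerWitness_pi {G : Type*} [Group G] [TopologicalSpace G]
    [IsTopologicalGroup G] [PolishSpace G] {K : ℕ → Type*} [∀ n, TopologicalSpace (K n)]
    [∀ n, CompactSpace (K n)] [∀ n, T2Space (K n)] [∀ n, SecondCountableTopology (K n)]
    [∀ n, Nonempty (K n)] {f : ∀ n, K n → G} (hf : ∀ n, Continuous (f n)) {B : ℕ → Set G}
    (hB : ∀ n, @MeasurableSet G (borel G) (B n)) (hfB : ∀ n, IsHaarMeagerWitness (f n) (B n)) :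
    ∃ U : ∀ n, Set (K n), (∀ n, (U n).Nonempty) ∧
      ∃ F : (∀ n, closure (U n)) → G, Continuous F ∧ ∀ n, IsHaarMeagerWitness F (B n) := by
  let := upgradeIsCompletelyMetrizable G
  obtain ⟨U, c, hU, hdist⟩ := exists_isOpen_dist_partialProd_le hf
  set φ := fun n (y : closure (U n)) => (c n)⁻¹ * f n y
  have hφ n : IsHaarMeagerWitness (φ n) (B n) := ((hfB n).comp_val_closure (hU n).1).const_mul _
  obtain ⟨F, hFc, hF⟩ := exists_continuous_tendsto_of_dist_le_geometric
    (continuous_partialProd fun n => by fun_prop) hdist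
  refine ⟨U, fun n => (hU n).2, F, hFc, fun n => isHaarMeagerWitness_iff.2 fun g h => ?_⟩
  refine ((by fun_prop : Continuous fun x => g * F x * h).baireMeasurableSet_preimage
    (hB n)).isMeagre_of_forall_isMeagre_update n fun x => ?_
  simp only [mem_preimage, apply_update_eq_of_tendsto hF]
  simpa only [mul_assoc] using isHaarMeagerWitness_iff.1 (hφ n) (g * partialProd φ n x)
    ((partialProd φ (n + 1) x)⁻¹ * F x * h)

/-- The Haar meager subsets of a Polish group form a σ-ideal. -/
theorem haarMeager_sigma_ideal {G : Type*} [Group G] [TopologicalSpace G]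
    [IsTopologicalGroup G] [PolishSpace G] :
    (∀ A B : Set G, A ⊆ B → IsHaarMeager B → IsHaarMeager A) ∧
    (∀ A : ℕ → Set G, (∀ n, IsHaarMeager (A n)) → IsHaarMeager (⋃ n, A n)) := by
  refine ⟨fun A A' hAA' ⟨B, hA'B, hB, hK⟩ => ⟨B, hAA'.trans hA'B, hB, hK⟩, fun A hA => ?_⟩
  choose B hAB hB K _ _ _ _ f hf hfB using hA
  obtain ⟨U, hU, F, hFc, hFB⟩ := exists_isHaarMeagerWitness_pi hf hB hfB
  exact ⟨⋃ n, B n, iUnion_mono hAB, MeasurableSet.iUnion hB, ∀ n, closure (U n), inferInstance,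
    inferInstance, inferInstance, ⟨fun n => ⟨_, subset_closure (hU n).some_mem⟩⟩, F, hFc,
    isHaarMeagerWitness_iUnion hFB⟩
end

section
/- Let G be a Polish group. Then every Haar meager subset of G is meager in G. -/
/-!
Let `B ⊇ A` and `f : K → G` witness that `A` is Haar meager. Being Borel, `B` differs from an open
set `U` by a meager set, and `U` is nonempty unless `B` is meager. A Kuratowski–Ulam type argument
shows that for a comeager set of `g ∈ G` the map `k ↦ g * f k` pulls the meager set `U \ B` back to
a meager subset of `K`. Choosing such a `g` with `g * f k₀ ∈ U`, the nonempty open set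
`{k | g * f k ∈ U}` is covered by two meager sets, contradicting the Baire property of `K`.
-/

open Set Filter TopologicalSpace

section

variable {G K : Type*} [Group G] [TopologicalSpace G] [SeparatelyContinuousMul G]
  [TopologicalSpace K]

lemma IsNowhereDense.preimage_mul_const {F : Set G} (hF : IsNowhereDense F) (a : G) :
    IsNowhereDense ((· * a) ⁻¹' F) := by
  rw [← inv_inv a, ← image_mul_right]
  exact (Homeomorph.mulRight a⁻¹).isInducing.isNowhereDense_image hF

lemma isNowhereDense_setOf_forall_mul_mem {F : Set G} (hF : IsNowhereDense F) {S : Set G}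
    (hS : S.Nonempty) : IsNowhereDense {g | ∀ s ∈ S, g * s ∈ F} :=
  let ⟨s, hs⟩ := hS
  (hF.preimage_mul_const s).mono fun _ hg => hg s hs

/-- If `(g * f ·) ⁻¹' closure F` has interior, it contains a nonempty basic open set `V`, and then
`g * f k ∈ closure F` for all `k ∈ V`: countably many nowhere dense conditions on `g`. -/
lemma isMeagre_setOf_not_isNowhereDense_preimage_mul [SecondCountableTopology K] {f : K → G}
    (hf : Continuous f) {F : Set G} (hF : IsNowhereDense F) :
    IsMeagre {g | ¬IsNowhereDense ((g * f ·) ⁻¹' F)} := by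
  let 𝒱 := {V ∈ countableBasis K | V.Nonempty}
  have h𝒱 : 𝒱.Countable := (countable_countableBasis K).mono (sep_subset _ _)
  refine (isMeagre_biUnion h𝒱 fun V hV =>
    (isNowhereDense_setOf_forall_mul_mem hF.closure (hV.2.image f)).isMeagre).mono ?_
  intro g hg
  have hclosed : IsClosed ((g * f ·) ⁻¹' closure F) :=
    isClosed_closure.preimage (hf.const_mul g)
  have hint : (interior ((g * f ·) ⁻¹' closure F)).Nonempty := by
    rw [nonempty_iff_ne_empty, ne_eq, ← hclosed.isNowhereDense_iff]
    exact fun h => hg (h.mono (preimage_mono subset_closure))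
  obtain ⟨k, hk⟩ := hint
  obtain ⟨V, hVb, hkV, hVsub⟩ :=
    (isBasis_countableBasis K).exists_subset_of_mem_open hk isOpen_interior
  exact mem_biUnion ⟨hVb, k, hkV⟩ <|
    forall_mem_image.2 fun _ hk' => (hVsub.trans interior_subset) hk'

lemma eventually_isMeagre_preimage_mul [SecondCountableTopology K] {f : K → G}
    (hf : Continuous f) {M : Set G} (hM : IsMeagre M) :
    ∀ᶠ g in residual G, IsMeagre ((g * f ·) ⁻¹' M) := by
  obtain ⟨S, hS, hSc, hMS⟩ := isMeagre_iff_countable_union_isNowhereDense.1 hM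
  have hgeneric : ∀ᶠ g in residual G, ∀ F ∈ S, IsNowhereDense ((g * f ·) ⁻¹' F) :=
    (eventually_countable_ball hSc).2 fun F hF => by
      simpa only [IsMeagre, compl_ofPred, not_not, Filter.Eventually] using
        isMeagre_setOf_not_isNowhereDense_preimage_mul hf (hS F hF)
  filter_upwards [hgeneric] with g hg
  refine (isMeagre_biUnion hSc fun F hF => (hg F hF).isMeagre).mono ?_
  rw [← preimage_iUnion₂, ← sUnion_eq_biUnion]
  exact preimage_mono hMS

theorem isMeagre_of_forall_isMeagre_preimage_mul [BaireSpace G] [BaireSpace K]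
    [SecondCountableTopology K] [Nonempty K] {f : K → G} (hf : Continuous f) {B : Set G}
    (hB : BaireMeasurableSet B) (h : ∀ g, IsMeagre ((g * f ·) ⁻¹' B)) : IsMeagre B := by
  obtain ⟨U, hU, hBU⟩ := hB.residualEq_isOpen
  have hBU' : ∀ᶠ x in residual G, x ∈ B ↔ x ∈ U := eventuallyEq_set.1 hBU
  have hB_diff : IsMeagre (B \ U) := mem_of_superset hBU' fun _ hx hxBU => hxBU.2 (hx.1 hxBU.1)
  have hU_diff : IsMeagre (U \ B) := mem_of_superset hBU' fun _ hx hxUB => hxUB.2 (hx.2 hxUB.1)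
  by_contra hBm
  obtain ⟨u, hu⟩ : U.Nonempty :=
    nonempty_iff_ne_empty.2 fun hUe => hBm (hB_diff.mono (by simp [hUe]))
  obtain ⟨k₀⟩ := ‹Nonempty K›
  obtain ⟨g, hg, hgU⟩ := (dense_of_mem_residual (eventually_isMeagre_preimage_mul hf hU_diff))
    |>.exists_mem_open (hU.preimage (continuous_mul_const (f k₀)))
      ⟨u * (f k₀)⁻¹, by simpa using hu⟩
  refine not_isMeagre_of_isOpen (hU.preimage (hf.const_mul g)) ⟨k₀, hgU⟩ ?_
  exact ((h g).union hg).mono fun k hk => (em (g * f k ∈ B)).imp id fun hkB => ⟨hk, hkB⟩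

end

/-- Every Haar meager subset of a Polish group is meager. -/
theorem isMeagre_of_isHaarMeager {G : Type*} [Group G] [TopologicalSpace G]
    [IsTopologicalGroup G] [PolishSpace G] (A : Set G) (hA : IsHaarMeager A) :
    IsMeagre A := by
  obtain ⟨B, hAB, hB, K, tK, _, _, _, f, hf, hm⟩ := hA
  let : MeasurableSpace G := borel G
  have : BorelSpace G := ⟨rfl⟩
  refine (isMeagre_of_forall_isMeagre_preimage_mul hf hB.baireMeasurableSet fun g => ?_).mono hAB
  simpa [image_mul_left, preimage_preimage] using hm g⁻¹ 1
end

section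
/- There exist a Gδ set A ⊆ ℝ, a nonempty compact metrizable topological space K, and a continuous map f : K → ℝ such that f⁻¹(z + A) is meager in K for every z ∈ ℝ (so f witnesses that A is Haar meager in the additive group ℝ), while A ∩ f(K) is comeager in the subspace f(K). -/
/-!
Embed the Cantor space into `ℝ` by a continuous injection `Φ` with a Sidon-type range:
`Φ x - Φ y = Φ x' - Φ y'` forces `x = x'` or `x = y`. Concretely `Φ x = ∑ₙ 4 ^ (-cₙ(x))`, where
`cₙ(x)` codes the length-`n` prefix of `x`. A sum of two such numbers has base-`4` digits at most
`2`, so the equation becomes an identity between sets of prefix codes, and two different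
sequences share only finitely many prefixes.

Let `B` be the meagre `F_σ` set of sequences whose even coordinates are eventually `false`, and
`A = Φ '' Bᶜ`, a `G_δ` since `Φ` is a closed embedding. On `K = (Bool × Bool)^ℕ` the map `g` copies
the second coordinates, except that once `(u n).1 = true` it sets every even coordinate `i ≥ n`
to `false`. Then `A` is comeagre in `Φ(2^ℕ) = f(K)` for `f = Φ ∘ g`, although
`f⁻¹(A) = g⁻¹(Bᶜ)` lies in the nowhere dense set where all first coordinates are `false`. For
`z ≠ 0`, `Φ⁻¹(z + A)` has at most one point, and the fibres of `g` are nowhere dense.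
-/

open Set Function Topology Encodable

theorem DependsOn.continuous {ι β : Type*} {α : ι → Type*} [∀ i, TopologicalSpace (α i)]
    [∀ i, DiscreteTopology (α i)] [TopologicalSpace β] {f : (Π i, α i) → β} {s : Set ι}
    (hs : s.Finite) (hf : DependsOn f s) : Continuous f := by
  refine (IsLocallyConstant.iff_eventually_eq f).2 (fun x => ?_) |>.continuous
  filter_upwards [(isOpen_set_pi hs fun i _ => isOpen_discrete {x i}).mem_nhds (by simp)]
    with y hy using hf fun i hi => hy i hi

section SetPi

variable {ι : Type*} {X : ι → Type*} [∀ i, TopologicalSpace (X i)] {I : Set ι}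
  {s : ∀ i, Set (X i)}

theorem interior_set_pi_eq_empty (hI : I.Infinite) (hs : ∀ i ∈ I, s i ≠ univ) :
    interior (I.pi s) = ∅ := by
  classical
  refine eq_empty_of_forall_notMem fun u hu => ?_
  obtain ⟨J, v, hv, hJ⟩ := isOpen_pi_iff.1 isOpen_interior u hu
  obtain ⟨i, hiI, hiJ⟩ := hI.exists_notMem_finset J
  obtain ⟨w, hw⟩ := (ne_univ_iff_exists_notMem _).1 (hs i hiI)
  have hmem : update u i w ∈ I.pi s := interior_subset <| hJ fun j hj => by
    rw [update_of_ne (ne_of_mem_of_not_mem hj hiJ)]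
    exact (hv j hj).2
  exact hw (by simpa using hmem i hiI)

theorem isMeagre_set_pi (hI : I.Infinite) (hc : ∀ i ∈ I, IsClosed (s i))
    (hs : ∀ i ∈ I, s i ≠ univ) : IsMeagre (I.pi s) :=
  ((isClosed_set_pi hc).isNowhereDense_iff.2 (interior_set_pi_eq_empty hI hs)).isMeagre

end SetPi

theorem eq_zero_of_hasSum_mul_quarter_pow {a : ℕ → ℤ} (ha : ∀ m, |a m| ≤ 2)
    (h : HasSum (fun m => (a m : ℝ) * (1 / 4) ^ m) 0) : a = 0 := by
  classical
  by_contra hne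
  have hex : ∃ m, a m ≠ 0 := by simpa [funext_iff] using hne
  set N := Nat.find hex
  have htail := (hasSum_nat_add_iff' (N + 1)).2 h
  rw [Finset.sum_range_succ, Finset.sum_eq_zero fun m hm =>
    by simp [not_not.1 (Nat.find_min hex (Finset.mem_range.1 hm))], zero_add, zero_sub] at htail
  -- the first nonzero digit outweighs the tail, since `2 * ∑_{n > N} 4⁻ⁿ = 2 / 3 * 4⁻ᴺ`
  have hgeom : HasSum (fun n => 2 * (1 / 4 : ℝ) ^ (N + 1) * (1 / 4) ^ n)
      (2 * (1 / 4) ^ (N + 1) * (1 - 1 / 4)⁻¹) :=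
    (hasSum_geometric_of_lt_one (by norm_num) (by norm_num)).mul_left _
  have hbound := htail.norm_le_of_bounded hgeom fun n => by
    rw [norm_mul, norm_pow, Real.norm_of_nonneg (by norm_num : (0 : ℝ) ≤ 1 / 4),
      Real.norm_eq_abs, ← Int.cast_abs]
    calc ((|a (n + (N + 1))| : ℤ) : ℝ) * (1 / 4) ^ (n + (N + 1))
        ≤ 2 * (1 / 4) ^ (n + (N + 1)) :=
          mul_le_mul_of_nonneg_right (by exact_mod_cast ha _) (by positivity)
      _ = _ := by ring
  rw [norm_neg, norm_mul, norm_pow, Real.norm_of_nonneg (by norm_num : (0 : ℝ) ≤ 1 / 4),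
    Real.norm_eq_abs, show 2 * (1 / 4 : ℝ) ^ (N + 1) * (1 - 1 / 4)⁻¹ = 2 / 3 * (1 / 4) ^ N by
      ring] at hbound
  have h1 : (1 : ℝ) ≤ |(a N : ℝ)| := by exact_mod_cast Int.one_le_abs (Nat.find_spec hex)
  nlinarith [pow_pos (by norm_num : (0 : ℝ) < 1 / 4) N]

def prefixCode (x : ℕ → Bool) (n : ℕ) : ℕ := encode (List.ofFn fun i : Fin n => x i)

theorem le_prefixCode (x : ℕ → Bool) (n : ℕ) : n ≤ prefixCode x n :=
  List.length_ofFn.symm.trans_le (length_le_encode _)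

theorem quarter_pow_prefixCode_le (x : ℕ → Bool) (n : ℕ) :
    (1 / 4 : ℝ) ^ prefixCode x n ≤ (1 / 4) ^ n :=
  pow_le_pow_of_le_one (by norm_num) (by norm_num) (le_prefixCode x n)

theorem dependsOn_prefixCode (n : ℕ) : DependsOn (prefixCode · n) (Iio n) := fun x y h => by
  unfold prefixCode
  exact congrArg _ (congrArg List.ofFn (funext fun i => h i i.isLt))

theorem prefixCode_eq_prefixCode_iff {x y : ℕ → Bool} {m n : ℕ} :
    prefixCode x m = prefixCode y n ↔ m = n ∧ ∀ i < m, x i = y i := by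
  refine ⟨fun h => ?_, fun ⟨hmn, h⟩ => hmn ▸ dependsOn_prefixCode m h⟩
  have hl := encode_injective h
  obtain rfl : m = n := by simpa using congrArg List.length hl
  exact ⟨rfl, fun i hi => congrFun (List.ofFn_injective hl) ⟨i, hi⟩⟩

theorem prefixCode_injective (x : ℕ → Bool) : Injective (prefixCode x) :=
  fun _ _ h => (prefixCode_eq_prefixCode_iff.1 h).1

theorem prefixCode_mem_range_iff {x y : ℕ → Bool} {n : ℕ} :
    prefixCode x n ∈ range (prefixCode y) ↔ ∀ i < n, x i = y i :=
  ⟨fun ⟨_, hm⟩ => (prefixCode_eq_prefixCode_iff.1 hm.symm).2,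
    fun h => ⟨n, prefixCode_eq_prefixCode_iff.2 ⟨rfl, fun i hi => (h i hi).symm⟩⟩⟩

noncomputable def sidonEmbedding (x : ℕ → Bool) : ℝ := ∑' n, (1 / 4 : ℝ) ^ prefixCode x n

theorem continuous_sidonEmbedding : Continuous sidonEmbedding :=
  continuous_tsum (fun n => continuous_of_discreteTopology.comp
      ((dependsOn_prefixCode n).continuous (finite_Iio n)))
    (summable_geometric_of_lt_one (by norm_num : (0 : ℝ) ≤ 1 / 4) (by norm_num))
    fun n x => by
      rw [norm_pow, Real.norm_of_nonneg (by norm_num)]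
      exact quarter_pow_prefixCode_le x n

noncomputable def codeDigit (x : ℕ → Bool) (m : ℕ) : ℤ := (range (prefixCode x)).indicator 1 m

theorem codeDigit_eq_zero_or_one (x : ℕ → Bool) (m : ℕ) :
    codeDigit x m = 0 ∨ codeDigit x m = 1 := by
  by_cases hm : m ∈ range (prefixCode x) <;> simp [codeDigit, hm]

theorem hasSum_codeDigit (x : ℕ → Bool) :
    HasSum (fun m => (codeDigit x m : ℝ) * (1 / 4) ^ m) (sidonEmbedding x) := by
  refine ((prefixCode_injective x).hasSum_iff fun m hm => by
    simp [codeDigit, indicator_of_notMem hm]).1 ?_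
  have hsum : Summable fun n => (1 / 4 : ℝ) ^ prefixCode x n :=
    (summable_geometric_of_lt_one (by norm_num) (by norm_num)).of_nonneg_of_le
      (fun _ => by positivity) (quarter_pow_prefixCode_le x)
  simpa [Function.comp_def, codeDigit, sidonEmbedding] using hsum.hasSum

theorem codeDigit_add_eq_of_sidonEmbedding_sub_eq_sub {x y x' y' : ℕ → Bool}
    (h : sidonEmbedding x - sidonEmbedding y = sidonEmbedding x' - sidonEmbedding y') :
    codeDigit x + codeDigit y' = codeDigit x' + codeDigit y := by
  rw [← sub_eq_zero, ← sub_sub]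
  refine eq_zero_of_hasSum_mul_quarter_pow (fun m => ?_) ?_
  · have := codeDigit_eq_zero_or_one x m; have := codeDigit_eq_zero_or_one y m
    have := codeDigit_eq_zero_or_one x' m; have := codeDigit_eq_zero_or_one y' m
    simp only [Pi.add_apply, Pi.sub_apply]
    exact abs_le.2 ⟨by omega, by omega⟩
  · have hsum := (((hasSum_codeDigit x).add (hasSum_codeDigit y')).sub
      (hasSum_codeDigit x')).sub (hasSum_codeDigit y)
    rw [show sidonEmbedding x + sidonEmbedding y' - sidonEmbedding x' - sidonEmbedding y = 0 by
      linarith] at hsum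
    exact hsum.congr_fun fun m => by simp only [Pi.add_apply, Pi.sub_apply]; push_cast; ring

theorem eq_or_eq_of_sidonEmbedding_sub_eq_sub {x y x' y' : ℕ → Bool}
    (h : sidonEmbedding x - sidonEmbedding y = sidonEmbedding x' - sidonEmbedding y') :
    x = x' ∨ x = y := by
  refine or_iff_not_imp_left.2 fun hne => funext fun j => ?_
  obtain ⟨k, hk⟩ := Function.ne_iff.1 hne
  set n := max j k + 1
  have hx : prefixCode x n ∈ range (prefixCode x) := mem_range_self n
  have hx' : prefixCode x n ∉ range (prefixCode x') := fun hmem =>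
    hk (prefixCode_mem_range_iff.1 hmem k (by omega))
  have hy : prefixCode x n ∈ range (prefixCode y) := by
    by_contra hy
    have hd := congrFun (codeDigit_add_eq_of_sidonEmbedding_sub_eq_sub h) (prefixCode x n)
    have hy' := codeDigit_eq_zero_or_one y' (prefixCode x n)
    simp only [codeDigit, Pi.add_apply, Pi.one_apply, indicator_of_mem hx,
      indicator_of_notMem hx', indicator_of_notMem hy] at hd hy'
    omega
  exact prefixCode_mem_range_iff.1 hy j (by omega)

theorem sidonEmbedding_injective : Injective sidonEmbedding := fun x y h =>
  (eq_or_eq_of_sidonEmbedding_sub_eq_sub (x' := y) (y' := y) (by rw [h])).elim id id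

theorem subsingleton_preimage_sidonEmbedding_add_range {z : ℝ} (hz : z ≠ 0) :
    (sidonEmbedding ⁻¹' ((z + ·) '' range sidonEmbedding)).Subsingleton := by
  rintro x ⟨_, ⟨y, rfl⟩, hx⟩ x' ⟨_, ⟨y', rfl⟩, hx'⟩
  rcases eq_or_eq_of_sidonEmbedding_sub_eq_sub (show sidonEmbedding x - sidonEmbedding y =
      sidonEmbedding x' - sidonEmbedding y' by linarith) with h | rfl
  · exact h
  · exact absurd (by linarith) hz

theorem isGδ_image_compl_iUnion {X Y : Type*} [TopologicalSpace X] [CompactSpace X]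
    [TopologicalSpace Y] [T2Space Y] [PerfectlyNormalSpace Y] {f : X → Y} (hc : Continuous f)
    (hf : Injective f) {D : ℕ → Set X} (hD : ∀ n, IsClosed (D n)) :
    IsGδ (f '' (⋃ n, D n)ᶜ) := by
  rw [image_compl_eq_range_sdiff_image hf, image_iUnion, sdiff_eq, compl_iUnion]
  exact (isCompact_range hc).isClosed.isGδ.inter
    (.iInter_of_isOpen fun n => ((hD n).isCompact.image hc).isClosed.isOpen_compl)

theorem Topology.IsEmbedding.isMeagre_setOf_notMem_image_compl {X Y : Type*}
    [TopologicalSpace X] [TopologicalSpace Y] {f : X → Y} (hf : IsEmbedding f) {B : Set X}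
    (hB : IsMeagre B) : IsMeagre {y : range f | (y : Y) ∉ f '' Bᶜ} := by
  let e := hf.toHomeomorph
  convert hB.preimage_of_isOpenMap e.symm.continuous e.symm.isOpenMap using 1
  ext y
  obtain ⟨x, rfl⟩ := e.surjective y
  rw [mem_preimage, e.symm_apply_apply]
  show f x ∉ f '' Bᶜ ↔ x ∈ B
  rw [hf.injective.mem_set_image, mem_compl_iff, not_not]

def collapse (u : ℕ → Bool × Bool) (i : ℕ) : Bool :=
  if Even i ∧ ∃ n ≤ i, (u n).1 = true then false else (u i).2

def falseOnEvensFrom (N : ℕ) : Set (ℕ → Bool) := {i | N ≤ i ∧ Even i}.pi fun _ => {false}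

def evenEventuallyFalse : Set (ℕ → Bool) := ⋃ N, falseOnEvensFrom N

theorem isClosed_falseOnEvensFrom (N : ℕ) : IsClosed (falseOnEvensFrom N) :=
  isClosed_set_pi fun _ _ => isClosed_discrete _

theorem isMeagre_evenEventuallyFalse : IsMeagre evenEventuallyFalse :=
  isMeagre_iUnion fun N => isMeagre_set_pi
    (infinite_of_forall_exists_gt fun a => ⟨2 * (N + a + 1), ⟨by omega, even_two_mul _⟩, by omega⟩)
    (fun _ _ => isClosed_discrete _) fun _ _ => (ne_univ_iff_exists_notMem _).2 ⟨true, by simp⟩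

theorem continuous_collapse : Continuous collapse := by
  refine continuous_pi fun i => DependsOn.continuous (finite_Iic i) fun u v h => ?_
  have hex : (∃ n ≤ i, (u n).1 = true) ↔ ∃ n ≤ i, (v n).1 = true :=
    exists_congr fun n => and_congr_right fun hn => by rw [h n hn]
  simp only [collapse, hex, h i (mem_Iic.2 le_rfl)]

theorem collapse_surjective : Surjective collapse :=
  fun x => ⟨fun i => (false, x i), funext fun i => by simp [collapse]⟩

theorem isMeagre_preimage_collapse_singleton (x : ℕ → Bool) : IsMeagre (collapse ⁻¹' {x}) := by
  refine (isMeagre_set_pi (I := {i | Odd i}) (s := fun i => {p | p.2 = x i})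
    (infinite_of_forall_exists_gt fun a => ⟨2 * a + 1, odd_two_mul_add_one a, by omega⟩)
    (fun _ _ => isClosed_discrete _)
    fun i _ => (ne_univ_iff_exists_notMem _).2 ⟨(false, !x i), by simp⟩).mono ?_
  rintro u rfl i (hi : Odd i)
  simp [collapse, Nat.not_even_iff_odd.2 hi]

theorem isMeagre_preimage_collapse_of_subsingleton {s : Set (ℕ → Bool)} (hs : s.Subsingleton) :
    IsMeagre (collapse ⁻¹' s) := by
  rcases hs.eq_empty_or_singleton with rfl | ⟨x, rfl⟩
  · exact preimage_empty (f := collapse) ▸ .empty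
  · exact isMeagre_preimage_collapse_singleton x

theorem isMeagre_preimage_collapse_compl_evenEventuallyFalse :
    IsMeagre (collapse ⁻¹' evenEventuallyFalseᶜ) := by
  refine (isMeagre_set_pi infinite_univ (s := fun _ => {p : Bool × Bool | p.1 = false})
    (fun _ _ => isClosed_discrete _)
    fun _ _ => (ne_univ_iff_exists_notMem _).2 ⟨(true, true), by simp⟩).mono ?_
  intro u hu n _
  by_contra hn
  exact hu (mem_iUnion.2 ⟨n, fun i hi => if_pos ⟨hi.2, n, hi.1, by simpa using hn⟩⟩)

/-- There are a `Gδ` set `A ⊆ ℝ`, a nonempty compact metrizable space `K` and a continuous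
map `f : K → ℝ` such that `f ⁻¹' (z + A)` is meager in `K` for every `z ∈ ℝ` (so `f`
witnesses that `A` is Haar meager in `(ℝ, +)`), while `A ∩ f '' K` is comeager in the
subspace `f '' K = Set.range f`. -/
theorem exists_gdelta_haarMeager_comeager_in_image :
    ∃ A : Set ℝ, IsGδ A ∧
      ∃ (K : Type) (tK : TopologicalSpace K),
        @CompactSpace K tK ∧ @TopologicalSpace.MetrizableSpace K tK ∧ Nonempty K ∧
        ∃ f : K → ℝ, @Continuous K ℝ tK _ f ∧
          (∀ z : ℝ, @IsMeagre K tK (f ⁻¹' ((fun b => z + b) '' A))) ∧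
          IsMeagre {y : Set.range f | (y : ℝ) ∉ A} := by
  refine ⟨sidonEmbedding '' evenEventuallyFalseᶜ, isGδ_image_compl_iUnion
    continuous_sidonEmbedding sidonEmbedding_injective isClosed_falseOnEvensFrom,
    ℕ → Bool × Bool, inferInstance, inferInstance, inferInstance, inferInstance,
    sidonEmbedding ∘ collapse, continuous_sidonEmbedding.comp continuous_collapse, fun z => ?_, ?_⟩
  · rcases eq_or_ne z 0 with rfl | hz
    · simpa [preimage_comp, sidonEmbedding_injective.preimage_image] using
        isMeagre_preimage_collapse_compl_evenEventuallyFalse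
    · exact (isMeagre_preimage_collapse_of_subsingleton
        (subsingleton_preimage_sidonEmbedding_add_range hz)).mono
        (preimage_mono (image_mono (image_subset_range _ _)))
  · rw [range_comp, collapse_surjective.range_eq, image_univ]
    exact (continuous_sidonEmbedding.isClosedEmbedding sidonEmbedding_injective).isEmbedding
      |>.isMeagre_setOf_notMem_image_compl isMeagre_evenEventuallyFalse
end

section
/- Let G be an abelian Polish group, let P ⊆ G be a nonempty perfect set, and let C ⊆ G be a comeager set. Then there exists g ∈ G such that the intersection C ∩ (g + P) has cardinality of the continuum. -/
/-!
Take a dense Gδ set `W ⊆ C` and a countable dense set `D ⊆ P`. Each condition `g + d ∈ W` holds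
for comeager many `g`, so some `g` satisfies all of them at once. For that `g` the section
`{p ∈ P | g + p ∈ W}` is a Gδ set containing `D`, hence a dense Gδ in the perfect Polish space
`P`. Countable sets are meagre there, so by Baire the section is uncountable, and an uncountable
Gδ (i.e. clopenable) subset of a Polish space contains a Cantor set.
-/

open Set Filter Topology TopologicalSpace Cardinal

theorem PolishSpace.mk_le_continuum (X : Type*) [TopologicalSpace X] [PolishSpace X] :
    #X ≤ 𝔠 := by
  rcases isEmpty_or_nonempty X with _ | _
  · simp
  · obtain ⟨f, -, hf⟩ := PolishSpace.exists_nat_nat_continuous_surjective X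
    simpa [mk_arrow] using lift_mk_le_lift_mk_of_surjective hf

theorem Preperfect.perfectSpace {X : Type*} [TopologicalSpace X] {P : Set X}
    (hP : Preperfect P) : PerfectSpace P := by
  rw [perfectSpace_def, preperfect_iff_nhds]
  rintro x - U hU
  obtain ⟨V, hV, hVU⟩ := mem_nhds_subtype P x U |>.1 hU
  obtain ⟨y, ⟨hyV, hyP⟩, hyx⟩ := preperfect_iff_nhds.1 hP x x.2 V hV
  exact ⟨⟨y, hyP⟩, ⟨hVU hyV, mem_univ _⟩, fun h => hyx (congrArg Subtype.val h)⟩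

theorem Set.Countable.isMeagre {X : Type*} [TopologicalSpace X] [T1Space X] [PerfectSpace X]
    {s : Set X} (hs : s.Countable) : IsMeagre s := by
  rw [← biUnion_of_singleton s]
  exact isMeagre_biUnion hs fun x _ =>
    (isClosed_singleton.isNowhereDense_iff.2 (interior_singleton x)).isMeagre

theorem IsGδ.isClopenable {X : Type*} [TopologicalSpace X] [PolishSpace X] {s : Set X}
    (hs : IsGδ s) : PolishSpace.IsClopenable s := by
  obtain ⟨U, hUo, rfl⟩ := hs.eq_iInter_nat
  simpa using (PolishSpace.IsClopenable.iUnion fun n => (hUo n).isClosed_compl.isClopenable).compl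

theorem IsGδ.continuum_le_mk_of_not_countable {X : Type*} [TopologicalSpace X] [PolishSpace X]
    {s : Set X} (hs : IsGδ s) (hunc : ¬s.Countable) : 𝔠 ≤ #s := by
  obtain ⟨τ, -, hτ, hclosed, -⟩ := hs.isClopenable
  obtain ⟨f, hfs, -, hf⟩ :=
    @IsClosed.exists_nat_bool_injection_of_not_countable X τ hτ s hclosed hunc
  simpa [mk_arrow] using
    lift_mk_le_lift_mk_of_injective (hf.codRestrict fun x => hfs (mem_range_self x))

theorem continuum_le_mk_of_isGδ_of_dense {X : Type*} [TopologicalSpace X] [PolishSpace X]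
    [PerfectSpace X] [Nonempty X] {s : Set X} (hs : IsGδ s) (hd : Dense s) : 𝔠 ≤ #s :=
  hs.continuum_le_mk_of_not_countable fun hc =>
    not_isMeagre_of_isGδ_of_dense hs hd hc.isMeagre

theorem eventually_residual_forall_add_mem {G : Type*} [AddGroup G] [TopologicalSpace G]
    [ContinuousAdd G] {V : Set G} (hV : V ∈ residual G) {D : Set G} (hD : D.Countable) :
    ∀ᶠ g in residual G, ∀ d ∈ D, g + d ∈ V :=
  (eventually_countable_ball hD).2 fun d _ =>
    tendsto_residual_of_isOpenMap (continuous_add_const d) (isOpenMap_add_right d) hV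

/-- If `P` is a nonempty perfect subset of an abelian Polish group `G` and `C ⊆ G` is
comeager, then some translate `g + P` meets `C` in a set of cardinality continuum. -/
theorem exists_translate_inter_comeager_continuum {G : Type*} [AddCommGroup G]
    [TopologicalSpace G] [IsTopologicalAddGroup G] [PolishSpace G]
    (P : Set G) (hPne : P.Nonempty) (hP : Perfect P)
    (C : Set G) (hC : IsMeagre Cᶜ) :
    ∃ g : G, Cardinal.mk ↥(C ∩ ((fun p => g + p) '' P)) = Cardinal.continuum := by
  obtain ⟨W, hWC, hWδ, hWd⟩ := mem_residual.1 (compl_compl C ▸ hC : C ∈ residual G)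
  have : PolishSpace P := hP.closed.polishSpace
  have : PerfectSpace P := hP.acc.perfectSpace
  have : Nonempty P := hPne.to_subtype
  obtain ⟨D, hDc, hDd⟩ := exists_countable_dense P
  obtain ⟨g, hg⟩ := dense_of_mem_residual (eventually_residual_forall_add_mem
    (residual_of_dense_Gδ hWδ hWd) (hDc.image ((↑) : P → G))) |>.nonempty
  have hsection : 𝔠 ≤ #{p : P | g + ↑p ∈ W} :=
    continuum_le_mk_of_isGδ_of_dense (hWδ.preimage (by fun_prop))
      (hDd.mono fun d hd => hg _ (mem_image_of_mem _ hd))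
  refine ⟨g, le_antisymm ((mk_set_le _).trans (PolishSpace.mk_le_continuum G)) ?_⟩
  refine hsection.trans (mk_le_of_injective (f := fun p => ⟨g + p, hWC p.2, p, p.1.2, rfl⟩) ?_)
  intro p q h
  exact Subtype.ext (Subtype.ext (add_left_cancel (congrArg Subtype.val h)))
end

section
/- Every uncountable Polish group G has an uncountable Borel subgroup H of uncountable index, i.e., a subgroup H of G whose underlying set is Borel and uncountable, and such that the set of cosets G/H is uncountable. -/
/-!
The proof builds an independent Cantor set: a continuous `f : (ℕ → Bool) → G` such that `f x`
is never `f y` times a word in points `f z` with `y, z ≠ x`. Such an `f` is the map induced by a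
Cantor scheme whose `n`-th level is found with the Baire category theorem in a finite power of
`G`: for fixed positions, the tuples satisfying one such relation form a closed set, and it is
nowhere dense because `G` has no isolated points, so the relation can be broken by moving the
single coordinate `x`.

Then the subgroup `H` generated by the compact set `f {x | x 0 = true}` is σ-compact, hence
Borel, and uncountable, while the points `f x` with `x 0 = false` lie in pairwise distinct
cosets of `H`.
-/

open Set Filter Topology Metric PiNat CantorScheme
open scoped Pointwise

section Words

variable {G ι κ : Type*} [Group G]

/-- A word is a list of letters with signs, `(i, false)` standing for the inverse of `v i`;
this is the formula of `FreeGroup.lift_mk`. -/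
def evalWord (v : ι → G) (w : List (ι × Bool)) : G :=
  (w.map fun p => cond p.2 (v p.1) (v p.1)⁻¹).prod

theorem evalWord_map (v : ι → G) (r : κ → ι) (w : List (κ × Bool)) :
    evalWord v (w.map (Prod.map r id)) = evalWord (v ∘ r) w := by
  simp [evalWord, Function.comp_def]

theorem evalWord_congr {v v' : ι → G} {w : List (ι × Bool)} (h : ∀ p ∈ w, v p.1 = v' p.1) :
    evalWord v w = evalWord v' w := by
  unfold evalWord
  rw [List.map_congr_left fun p hp => by rw [h p hp]]

theorem exists_evalWord_eq_of_mem_closure {v : ι → G} {g : G}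
    (hg : g ∈ Subgroup.closure (range v)) : ∃ w, evalWord v w = g := by
  rw [← FreeGroup.range_lift_eq_closure] at hg
  obtain ⟨⟨w⟩, rfl⟩ := hg
  exact ⟨w, (FreeGroup.lift_mk ..).symm⟩

theorem continuous_evalWord [TopologicalSpace G] [IsTopologicalGroup G] (w : List (ι × Bool)) :
    Continuous fun v : ι → G => evalWord v w :=
  continuous_list_prod _ fun p _ => by cases p.2 <;> dsimp only [cond_true, cond_false] <;> fun_prop

def IsIndependentUpTo (n : ℕ) (v : ι → G) : Prop :=
  ∀ i j (w : List (ι × Bool)), w.length ≤ n → i ≠ j → (∀ p ∈ w, p.1 ≠ i) →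
    v i ≠ v j * evalWord v w

theorem IsIndependentUpTo.injective {v : ι → G} (hv : IsIndependentUpTo 0 v) :
    Function.Injective v := fun i j hij => by
  by_contra hne
  exact hv i j [] le_rfl hne (by simp) (by simp [evalWord, hij])

theorem inv_mul_notMem_closure_image {v : ι → G} (hv : ∀ n, IsIndependentUpTo n v) {i j : ι}
    {S : Set ι} (hij : i ≠ j) (hi : i ∉ S) : (v j)⁻¹ * v i ∉ Subgroup.closure (v '' S) := by
  intro h
  rw [image_eq_range] at h
  obtain ⟨w, hw⟩ := exists_evalWord_eq_of_mem_closure h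
  refine hv w.length i j (w.map (Prod.map Subtype.val id)) (by simp) hij ?_ ?_
  · simp only [List.mem_map, Prod.exists]
    rintro _ ⟨z, b, -, rfl⟩
    exact fun hz => hi (hz ▸ z.2)
  · rw [evalWord_map, Function.comp_def, hw, mul_inv_cancel_left]

variable (ι) in
def forbiddenRelations (n : ℕ) : Set (ι × ι × List (ι × Bool)) :=
  {q | q.2.2.length ≤ n ∧ q.1 ≠ q.2.1 ∧ ∀ p ∈ q.2.2, p.1 ≠ q.1}

theorem finite_forbiddenRelations [Finite ι] (n : ℕ) : (forbiddenRelations ι n).Finite :=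
  (finite_univ.prod (finite_univ.prod (List.finite_length_le _ n))).subset
    fun _ hq => ⟨trivial, trivial, hq.1⟩

theorem setOf_isIndependentUpTo_eq (n : ℕ) :
    {v : ι → G | IsIndependentUpTo n v} =
      ⋂ q ∈ forbiddenRelations ι n, {v | v q.1 ≠ v q.2.1 * evalWord v q.2.2} := by
  ext v
  simp only [IsIndependentUpTo, forbiddenRelations, mem_ofPred_eq, mem_iInter, Prod.forall,
    and_imp]

end Words

theorem dense_setOf_apply_ne {X ι : Type*} [TopologicalSpace X] [PerfectSpace X] [DecidableEq ι]
    {F : (ι → X) → X} (i : ι) (hF : ∀ v a, F (Function.update v i a) = F v) :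
    Dense {v | v i ≠ F v} := by
  rw [dense_iff_inter_open]
  rintro U hU ⟨v, hv⟩
  by_cases hvi : v i ≠ F v
  · exact ⟨v, hv, hvi⟩
  have hupd : ∀ᶠ a in 𝓝 (v i), Function.update v i a ∈ U :=
    ((continuous_const.update i continuous_id).tendsto' (v i) v (by simp)).eventually_mem
      (hU.mem_nhds hv)
  obtain ⟨a, haU, hav⟩ := ((hupd.filter_mono nhdsWithin_le_nhds).and
    (self_mem_nhdsWithin (s := {v i}ᶜ))).exists
  refine ⟨Function.update v i a, haU, ?_⟩
  simpa [hF, ← not_not.1 hvi] using hav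

theorem perfectSpace_of_not_countable {G : Type*} [Group G] [TopologicalSpace G]
    [IsTopologicalGroup G] [TopologicalSpace.SeparableSpace G] (hG : ¬Countable G) :
    PerfectSpace G := by
  refine perfectSpace_iff_forall_not_isolated.2 fun x => neBot_iff.2 fun hx => hG ?_
  rw [← isOpen_singleton_iff_punctured_nhds] at hx
  have : DiscreteTopology G := discreteTopology_of_isOpen_singleton_one <| by
    simpa using (Homeomorph.mulLeft x⁻¹).isOpenMap _ hx
  exact TopologicalSpace.separableSpace_iff_countable.1 ‹_›

section Refinement

variable {G ι : Type*} [Group G] [MetricSpace G] [IsTopologicalGroup G]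

theorem isOpen_setOf_isIndependentUpTo [Finite ι] (n : ℕ) :
    IsOpen {v : ι → G | IsIndependentUpTo n v} := by
  rw [setOf_isIndependentUpTo_eq]
  exact (finite_forbiddenRelations n).isOpen_biInter fun _ _ =>
    isOpen_ne_fun (continuous_apply _) ((continuous_apply _).mul (continuous_evalWord _))

theorem dense_setOf_isIndependentUpTo [Finite ι] [CompleteSpace G] [PerfectSpace G] (n : ℕ) :
    Dense {v : ι → G | IsIndependentUpTo n v} := by
  classical
  rw [setOf_isIndependentUpTo_eq]
  refine dense_biInter_of_isOpen (fun _ _ => isOpen_ne_fun (continuous_apply _)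
    ((continuous_apply _).mul (continuous_evalWord _))) (finite_forbiddenRelations n).countable
    fun ⟨i, j, w⟩ ⟨_, hij, hw⟩ => dense_setOf_apply_ne i fun v a => ?_
  rw [Function.update_of_ne hij.symm]
  exact congrArg _ (evalWord_congr fun p hp => Function.update_of_ne (hw p hp) _ _)

theorem exists_balls_isIndependentUpTo [Fintype ι] [CompleteSpace G] [PerfectSpace G] (n : ℕ)
    {O : ι → Set G} (hO : ∀ i, IsOpen (O i)) (hne : ∀ i, (O i).Nonempty) {ε : ℝ} (hε : 0 < ε) :
    ∃ (c : ι → G) (r : ℝ), 0 < r ∧ r ≤ ε ∧ (∀ i, closedBall (c i) r ⊆ O i) ∧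
      ∀ v ∈ univ.pi fun i => ball (c i) r, IsIndependentUpTo n v := by
  have hOpi : IsOpen (univ.pi O) := isOpen_set_pi finite_univ fun i _ => hO i
  obtain ⟨c, hc⟩ := (dense_setOf_isIndependentUpTo n).inter_open_nonempty _ hOpi
    (univ_pi_nonempty_iff.2 hne)
  obtain ⟨δ, hδ, hcδ⟩ := Metric.isOpen_iff.1 (hOpi.inter (isOpen_setOf_isIndependentUpTo n)) c hc
  rw [ball_pi c hδ] at hcδ
  have hδO : ∀ i, ball (c i) δ ⊆ O i :=
    (univ_pi_subset_univ_pi_iff.1 (hcδ.trans inter_subset_left)).resolve_right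
      (by simp [ball_eq_empty, hδ])
  refine ⟨c, min (δ / 2) ε, by positivity, min_le_right _ _,
    fun i => (closedBall_subset_ball ?_).trans (hδO i),
    fun v hv => (hcδ (pi_mono (fun i _ => ball_subset_ball ?_) hv)).2⟩ <;>
  linarith [min_le_left (δ / 2) ε]

end Refinement

theorem Set.InjOn.exists_forall_mem_comp_eq {α ι β : Type*} {s : Set α} {r : α → ι}
    (hr : InjOn r s) {S : ι → Set β} (hS : ∀ i, (S i).Nonempty) {f : α → β}
    (hf : ∀ a ∈ s, f a ∈ S (r a)) : ∃ v : ι → β, (∀ i, v i ∈ S i) ∧ ∀ a ∈ s, v (r a) = f a := by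
  classical
  refine ⟨fun i => if h : ∃ a ∈ s, r a = i then f h.choose else (hS i).some, fun i => ?_,
    fun a ha => ?_⟩
  · dsimp only
    split_ifs with h
    · obtain ⟨hs, hi⟩ := h.choose_spec
      simpa only [hi] using hf _ hs
    · exact (hS i).some_mem
  · have h : ∃ a' ∈ s, r a' = r a := ⟨a, ha, rfl⟩
    dsimp only
    rw [dif_pos h, hr h.choose_spec.1 ha h.choose_spec.2]

theorem eventually_injOn_res {α : Type*} {s : Set (ℕ → α)} (hs : s.Finite) :
    ∀ᶠ n in atTop, InjOn (res · n) s := by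
  refine hs.eventually_all.2 fun x _ => hs.eventually_all.2 fun y _ => ?_
  by_cases hxy : x = y
  · exact .of_forall fun _ _ => hxy
  obtain ⟨k, hk⟩ := Function.ne_iff.1 hxy
  filter_upwards [eventually_gt_atTop k] with n hn h
  exact absurd (res_eq_res.1 h hn) hk

/-- Passing to a level at which the finitely many points involved have distinct restrictions
turns a relation among values of `f` into one among the nodes of that level. -/
theorem isIndependentUpTo_of_levels {G : Type*} [Group G]
    {E : (n : ℕ) → List.Vector Bool n → Set G} (hE : ∀ n t, (E n t).Nonempty)
    (hind : ∀ n (v : List.Vector Bool (n + 1) → G), (∀ t, v t ∈ E (n + 1) t) →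
      IsIndependentUpTo n v)
    {f : (ℕ → Bool) → G} (hf : ∀ x n, f x ∈ E n ⟨res x n, res_length x n⟩) (n : ℕ) :
    IsIndependentUpTo n f := by
  intro x y w hw hxy hwx
  set P : Set (ℕ → Bool) := insert x (insert y {z | ∃ p ∈ w, p.1 = z})
  have hP : P.Finite := ((w.map Prod.fst).finite_toSet.subset (by simp)).insert _ |>.insert _
  obtain ⟨m, hinj, hnm⟩ :=
    (((tendsto_add_atTop_nat 1).eventually (eventually_injOn_res hP)).and
      (eventually_ge_atTop n)).exists
  let r (z : ℕ → Bool) : List.Vector Bool (m + 1) := ⟨res z (m + 1), res_length z (m + 1)⟩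
  have hr : InjOn r P := fun a ha b hb h => hinj ha hb (congrArg Subtype.val h)
  obtain ⟨v, hvE, hvf⟩ := hr.exists_forall_mem_comp_eq (hE (m + 1)) fun z _ => hf z (m + 1)
  have hwP : ∀ p ∈ w, p.1 ∈ P := fun p hp => .inr (.inr ⟨p, hp, rfl⟩)
  have hvw := hind m v hvE (r x) (r y) (w.map (Prod.map r id)) (by simpa using hw.trans hnm)
    (hr.ne (.inl rfl) (.inr (.inl rfl)) hxy) (by
      simp only [List.mem_map, Prod.exists]
      rintro _ ⟨z, b, hzb, rfl⟩
      exact hr.ne (hwP _ hzb) (.inl rfl) (hwx _ hzb))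
  rwa [evalWord_map, hvf x (.inl rfl), hvf y (.inr (.inl rfl)),
    evalWord_congr fun p hp => hvf p.1 (hwP p hp)] at hvw

section IndependentCantorSet

variable (G : Type*) [Group G] [MetricSpace G] [CompleteSpace G] [IsTopologicalGroup G]
  [PerfectSpace G]

theorem exists_independent_levels :
    ∃ E : (n : ℕ) → List.Vector Bool n → Set G,
      (∀ n t, IsOpen (E n t) ∧ (E n t).Nonempty) ∧
      (∀ n (t : List.Vector Bool (n + 1)), closure (E (n + 1) t) ⊆ E n t.tail) ∧
      (∀ n t, ediam (E (n + 1) t) ≤ ENNReal.ofReal (2 / (n + 1))) ∧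
      ∀ n (v : List.Vector Bool (n + 1) → G), (∀ t, v t ∈ E (n + 1) t) → IsIndependentUpTo n v := by
  have step : ∀ n (E : List.Vector Bool n → Set G), (∀ t, IsOpen (E t) ∧ (E t).Nonempty) →
      ∃ E' : List.Vector Bool (n + 1) → Set G, (∀ t, IsOpen (E' t) ∧ (E' t).Nonempty) ∧
        (∀ t, closure (E' t) ⊆ E t.tail) ∧ (∀ t, ediam (E' t) ≤ ENNReal.ofReal (2 / (n + 1))) ∧
        ∀ v : List.Vector Bool (n + 1) → G, (∀ t, v t ∈ E' t) → IsIndependentUpTo n v := by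
    intro n E hE
    obtain ⟨c, r, hr, hrn, hcE, hind⟩ := exists_balls_isIndependentUpTo n
      (O := fun t : List.Vector Bool (n + 1) => E t.tail) (fun t => (hE _).1) (fun t => (hE _).2)
      (ε := 1 / (n + 1)) (by positivity)
    refine ⟨fun t => ball (c t) r, fun t => ⟨isOpen_ball, nonempty_ball.2 hr⟩,
      fun t => closure_ball_subset_closedBall.trans (hcE t),
      fun t => ediam_le_of_forall_dist_le fun x hx y hy => ?_, fun v hv => hind v fun t _ => hv t⟩
    calc dist x y ≤ r + r := (dist_triangle_right x y (c t)).trans (add_le_add hx.le hy.le)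
      _ ≤ 2 / (n + 1) := by linarith [show (1 : ℝ) / (n + 1) + 1 / (n + 1) = 2 / (n + 1) by ring]
  choose next hnext using step
  let L (n : ℕ) : {E : List.Vector Bool n → Set G // ∀ t, IsOpen (E t) ∧ (E t).Nonempty} :=
    Nat.rec ⟨fun _ => univ, fun _ => ⟨isOpen_univ, univ_nonempty⟩⟩
      (fun n E => ⟨next n E.1 E.2, (hnext n E.1 E.2).1⟩) n
  exact ⟨fun n => (L n).1, fun n => (L n).2, fun n => (hnext n _ (L n).2).2.1,
    fun n => (hnext n _ (L n).2).2.2.1, fun n => (hnext n _ (L n).2).2.2.2⟩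

theorem exists_continuous_forall_isIndependentUpTo :
    ∃ f : (ℕ → Bool) → G, Continuous f ∧ ∀ n, IsIndependentUpTo n f := by
  obtain ⟨E, hE, hclosure, hdiam, hind⟩ := exists_independent_levels G
  let A (l : List Bool) : Set G := E l.length ⟨l, rfl⟩
  have hA : ∀ n l (hl : l.length = n), A l = E n ⟨l, hl⟩ := by rintro n l rfl; rfl
  have hanti : ClosureAntitone A := fun l a => hclosure l.length ⟨a :: l, rfl⟩
  have hbound : Tendsto (fun n : ℕ => ENNReal.ofReal (2 / (n + 1))) atTop (𝓝 0) := by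
    simpa using ENNReal.tendsto_ofReal
      ((tendsto_const_div_atTop_nhds_zero_nat 2).comp (tendsto_add_atTop_nat 1))
  have hvanish : VanishingDiam A := fun x => by
    rw [← tendsto_add_atTop_iff_nat 1]
    refine tendsto_of_tendsto_of_tendsto_of_le_of_le tendsto_const_nhds hbound (fun _ => zero_le)
      fun n => ?_
    simpa only [hA _ _ (res_length x (n + 1))] using hdiam n _
  have hdom := hanti.map_of_vanishingDiam hvanish fun l => (hE _ _).2
  let f (x : ℕ → Bool) : G := (inducedMap A).2 ⟨x, hdom ▸ mem_univ x⟩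
  refine ⟨f, hvanish.map_continuous.comp (by fun_prop),
    isIndependentUpTo_of_levels (fun n t => (hE n t).2) hind fun x n => ?_⟩
  exact hA n _ (res_length x n) ▸ map_mem _ n

end IndependentCantorSet

section SubgroupClosure

variable {G : Type*} [Group G]

theorem Subgroup.coe_closure_eq_iUnion_pow (K : Set G) :
    (Subgroup.closure K : Set G) = ⋃ n : ℕ, (K ∪ K⁻¹) ^ n := by
  refine Subset.antisymm (fun g hg => ?_) (iUnion_subset fun n => Submonoid.pow_subset
    (S := (Subgroup.closure K).toSubmonoid) (union_subset subset_closure fun g hg => ?_))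
  · induction hg using Subgroup.closure_induction with
    | mem g hg => exact mem_iUnion.2 ⟨1, by simp [hg]⟩
    | one => exact mem_iUnion.2 ⟨0, by simp⟩
    | mul g h _ _ hg hh =>
      obtain ⟨m, hm⟩ := mem_iUnion.1 hg
      obtain ⟨n, hn⟩ := mem_iUnion.1 hh
      exact mem_iUnion.2 ⟨m + n, pow_add (K ∪ K⁻¹) m n ▸ mul_mem_mul hm hn⟩
    | inv g _ hg =>
      obtain ⟨n, hn⟩ := mem_iUnion.1 hg
      refine mem_iUnion.2 ⟨n, ?_⟩
      rwa [← Set.mem_inv, ← inv_pow, union_inv, inv_inv, union_comm]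
  · simpa using (Subgroup.closure K).inv_mem (subset_closure (Set.mem_inv.1 hg))

theorem IsCompact.measurableSet_subgroupClosure [TopologicalSpace G] [IsTopologicalGroup G]
    [T2Space G] [MeasurableSpace G] [OpensMeasurableSpace G] {K : Set G} (hK : IsCompact K) :
    MeasurableSet (Subgroup.closure K : Set G) := by
  have hpow : ∀ n : ℕ, IsCompact ((K ∪ K⁻¹) ^ n) := fun n => by
    induction n with
    | zero => simp
    | succ n ih => exact pow_succ (K ∪ K⁻¹) n ▸ ih.mul (hK.union hK.inv)
  rw [Subgroup.coe_closure_eq_iUnion_pow]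
  exact .iUnion fun n => (hpow n).isClosed.measurableSet

end SubgroupClosure

theorem uncountable_nat_bool : Uncountable (ℕ → Bool) := by
  rw [← Cardinal.aleph0_lt_mk_iff]
  simpa using Cardinal.cantor Cardinal.aleph0

/-- Every uncountable Polish group has an uncountable Borel subgroup of uncountable index. -/
theorem exists_uncountable_borel_subgroup_uncountable_index {G : Type*} [Group G]
    [TopologicalSpace G] [IsTopologicalGroup G] [PolishSpace G] (hG : ¬ Countable G) :
    ∃ H : Subgroup G, @MeasurableSet G (borel G) (H : Set G) ∧
      ¬ Countable (H : Set G) ∧ ¬ Countable (G ⧸ H) := by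
  let := TopologicalSpace.upgradeIsCompletelyMetrizable G
  have := perfectSpace_of_not_countable hG
  have := uncountable_nat_bool
  obtain ⟨f, hf, hindep⟩ := exists_continuous_forall_isIndependentUpTo G
  let T : Set (ℕ → Bool) := {x | x 0 = true}
  have hT : IsCompact T := (isClosed_eq (continuous_apply 0) continuous_const).isCompact
  refine ⟨Subgroup.closure (f '' T), ?_, fun h => ?_, fun h => ?_⟩
  · borelize G
    exact (hT.image hf).measurableSet_subgroupClosure
  · refine not_countable (Function.Injective.countable (f := fun x : ℕ → Bool =>
      (⟨f (Stream'.cons true x), Subgroup.subset_closure (mem_image_of_mem f rfl)⟩ :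
        Subgroup.closure (f '' T))) fun x y hxy => ?_)
    exact Stream'.cons_injective_right _ ((hindep 0).injective (congrArg Subtype.val hxy))
  · refine not_countable (Function.Injective.countable (f := fun x : ℕ → Bool =>
      (f (Stream'.cons false x) : G ⧸ Subgroup.closure (f '' T))) fun x y hxy => ?_)
    by_contra hne
    exact inv_mul_notMem_closure_image hindep
      ((Stream'.cons_injective_right false).ne (Ne.symm hne)) Bool.false_ne_true
      (QuotientGroup.eq.1 hxy)
end

section
/- Let G be an abelian Polish group and let H be a meager subgroup of G. Then there exists a nonempty perfect set P ⊆ G which intersects each coset of H in at most one point; equivalently, for all distinct x, y ∈ P, x − y ∉ H. -/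
/-!
The complement of `H` contains `⋂ n, W n` for a decreasing sequence of dense open sets `W n`
not containing `0`. For finitely many nonempty open sets `U i`, the tuples `x` with
`x i - x j ∈ W` for all `i ≠ j` form a dense open subset of `ι → G`, since each condition is the
preimage of `W` under the open map `x ↦ x i - x j`; hence there are arbitrarily small closed balls
inside the `U i` whose pairwise differences lie in `W`. Doing this level by level gives a Cantor
scheme of closed balls with radii tending to `0` in which any two distinct balls of level `n + 1`
have all their differences in `W n`. The induced map `(ℕ → Bool) → G` is a continuous injection,
and its image is the required perfect set.
-/

open Set Filter Topology Metric PiNat CantorScheme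

section TopologicalAddGroup

variable {G ι : Type*} [AddCommGroup G]

lemma setOf_pairwise_sub_mem_eq_iInter (W : Set G) :
    {x : ι → G | Pairwise fun i j => x i - x j ∈ W} =
      ⋂ p : {p : ι × ι // p.1 ≠ p.2}, (fun x : ι → G => x p.1.1 - x p.1.2) ⁻¹' W := by
  ext x
  simp [Pairwise]

variable [TopologicalSpace G] [IsTopologicalAddGroup G]

lemma isOpenMap_apply_sub_apply {i j : ι} (hij : i ≠ j) :
    IsOpenMap fun x : ι → G => x i - x j := by
  classical
  refine IsOpenMap.of_sections fun x => ⟨fun g => Function.update x i (g + x j), by fun_prop,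
    by simp, fun g => ?_⟩
  simp [Function.update_of_ne hij.symm]

variable [Finite ι] {W : Set G}

lemma isOpen_setOf_pairwise_sub_mem (hW : IsOpen W) :
    IsOpen {x : ι → G | Pairwise fun i j => x i - x j ∈ W} := by
  rw [setOf_pairwise_sub_mem_eq_iInter]
  exact isOpen_iInter_of_finite fun p => hW.preimage (by fun_prop)

lemma dense_setOf_pairwise_sub_mem (hWo : IsOpen W) (hWd : Dense W) :
    Dense {x : ι → G | Pairwise fun i j => x i - x j ∈ W} := by
  rw [setOf_pairwise_sub_mem_eq_iInter, ← sInter_range]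
  refine (finite_range _).dense_sInter ?_ ?_ <;> rintro _ ⟨p, rfl⟩
  · exact hWo.preimage (by fun_prop)
  · exact hWd.preimage (isOpenMap_apply_sub_apply p.2)

lemma exists_nhds_pairwise_sub_mem (hWo : IsOpen W) (hWd : Dense W) {U : ι → Set G}
    (hUo : ∀ i, IsOpen (U i)) (hU : ∀ i, (U i).Nonempty) :
    ∃ (x : ι → G) (V : ι → Set G), (∀ i, V i ∈ 𝓝 (x i) ∧ V i ⊆ U i) ∧
      Pairwise fun i j => ∀ y ∈ V i, ∀ z ∈ V j, y - z ∈ W := by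
  classical
  have hUpi : IsOpen (univ.pi U) := isOpen_set_pi finite_univ fun i _ => hUo i
  obtain ⟨x, hxU, hxW⟩ := (dense_setOf_pairwise_sub_mem hWo hWd).inter_open_nonempty _ hUpi
    (univ_pi_nonempty_iff.2 hU)
  obtain ⟨V, hV, hVW⟩ := isOpen_pi_iff'.1 (isOpen_setOf_pairwise_sub_mem (ι := ι) hWo) x hxW
  have hxV : x ∈ univ.pi V := fun i _ => (hV i).2
  refine ⟨x, fun i => V i ∩ U i, fun i => ⟨inter_mem ((hV i).1.mem_nhds (hV i).2)
    ((hUo i).mem_nhds (hxU i (mem_univ i))), inter_subset_right⟩, fun i j hij y hy z hz => ?_⟩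
  have hyz : Function.update (Function.update x i y) j z ∈ univ.pi V :=
    (update_mem_pi_iff_of_mem ((update_mem_pi_iff_of_mem hxV).2 fun _ => hy.1)).2 fun _ => hz.1
  simpa [hij] using hVW hyz hij

end TopologicalAddGroup

section PseudoMetric

variable {G ι : Type*} [AddCommGroup G] [PseudoMetricSpace G] [IsTopologicalAddGroup G] [Finite ι]

lemma exists_closedBall_pairwise_sub_mem {W : Set G} (hWo : IsOpen W) (hWd : Dense W)
    {U : ι → Set G} (hUo : ∀ i, IsOpen (U i)) (hU : ∀ i, (U i).Nonempty) {δ : ℝ} (hδ : 0 < δ) :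
    ∃ (c : ι → G) (r : ℝ), 0 < r ∧ r ≤ δ ∧ (∀ i, closedBall (c i) r ⊆ U i) ∧
      Pairwise fun i j => ∀ y ∈ closedBall (c i) r, ∀ z ∈ closedBall (c j) r, y - z ∈ W := by
  obtain ⟨c, V, hV, hVW⟩ := exists_nhds_pairwise_sub_mem hWo hWd hUo hU
  have hsmall : ∀ᶠ r in 𝓝 (0 : ℝ), r ≤ δ ∧ ∀ i, closedBall (c i) r ⊆ V i :=
    (eventually_le_nhds hδ).and (eventually_all.2 fun i => eventually_closedBall_subset (hV i).1)
  have hpos : ∀ᶠ r in 𝓝[>] (0 : ℝ), 0 < r := self_mem_nhdsWithin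
  obtain ⟨r, ⟨hrδ, hrV⟩, hr⟩ := ((hsmall.filter_mono nhdsWithin_le_nhds).and hpos).exists
  exact ⟨c, r, hr, hrδ, fun i => (hrV i).trans (hV i).2,
    fun i j hij y hy z hz => hVW hij y (hrV i hy) z (hrV j hz)⟩

variable {W : ℕ → Set G}

lemma exists_nested_closedBalls_pairwise_sub_mem (hWo : ∀ n, IsOpen (W n))
    (hWd : ∀ n, Dense (W n)) :
    ∃ (c : ∀ n, List.Vector Bool n → G) (r : ℕ → ℝ), (∀ n, 0 < r n) ∧ Tendsto r atTop (𝓝 0) ∧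
      (∀ n (v : List.Vector Bool (n + 1)),
        closedBall (c (n + 1) v) (r (n + 1)) ⊆ closedBall (c n v.tail) (r n)) ∧
      ∀ n, Pairwise fun v w : List.Vector Bool (n + 1) =>
        ∀ y ∈ closedBall (c (n + 1) v) (r (n + 1)), ∀ z ∈ closedBall (c (n + 1) w) (r (n + 1)),
          y - z ∈ W n := by
  have step : ∀ n (p : {p : (List.Vector Bool n → G) × ℝ // 0 < p.2}),
      ∃ q : {q : (List.Vector Bool (n + 1) → G) × ℝ // 0 < q.2}, q.1.2 ≤ 1 / (n + 1) ∧
        (∀ v, closedBall (q.1.1 v) q.1.2 ⊆ ball (p.1.1 v.tail) p.1.2) ∧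
        Pairwise fun v w => ∀ y ∈ closedBall (q.1.1 v) q.1.2,
          ∀ z ∈ closedBall (q.1.1 w) q.1.2, y - z ∈ W n := by
    rintro n ⟨⟨c, r⟩, hr⟩
    obtain ⟨c', r', hr', hr'δ, hsub, hsep⟩ := exists_closedBall_pairwise_sub_mem (hWo n) (hWd n)
      (U := fun v : List.Vector Bool (n + 1) => ball (c v.tail) r) (fun _ => isOpen_ball)
      (fun _ => nonempty_ball.2 hr) (δ := 1 / (n + 1)) (by positivity)
    exact ⟨⟨(c', r'), hr'⟩, hr'δ, hsub, hsep⟩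
  choose next hnext_le hnext_sub hnext_sep using step
  let level : ∀ n, {p : (List.Vector Bool n → G) × ℝ // 0 < p.2} :=
    fun n => Nat.rec ⟨(fun _ => 0, 1), one_pos⟩ next n
  refine ⟨fun n => (level n).1.1, fun n => (level n).1.2, fun n => (level n).2, ?_,
    fun n v => (hnext_sub n (level n) v).trans ball_subset_closedBall,
    fun n => hnext_sep n (level n)⟩
  exact (tendsto_add_atTop_iff_nat 1).1 <| squeeze_zero (fun n => (level (n + 1)).2.le)
    (fun n => hnext_le n (level n)) tendsto_one_div_add_atTop_nhds_zero_nat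

lemma exists_cantorScheme_pairwise_sub_mem (hWo : ∀ n, IsOpen (W n)) (hWd : ∀ n, Dense (W n)) :
    ∃ A : List Bool → Set G, ClosureAntitone A ∧ VanishingDiam A ∧ (∀ l, (A l).Nonempty) ∧
      ∀ n, Pairwise fun v w : List.Vector Bool (n + 1) =>
        ∀ y ∈ A v.1, ∀ z ∈ A w.1, y - z ∈ W n := by
  obtain ⟨c, r, hr, hr0, hsub, hsep⟩ := exists_nested_closedBalls_pairwise_sub_mem hWo hWd
  let A : List Bool → Set G := fun l => closedBall (c l.length ⟨l, rfl⟩) (r l.length)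
  have hA : ∀ n l (hl : l.length = n), A l = closedBall (c n ⟨l, hl⟩) (r n) := by
    rintro n l rfl
    rfl
  refine ⟨A, fun l a => ?_, fun σ => ?_, fun l => nonempty_closedBall.2 (hr _).le,
    fun n ⟨v, hv⟩ ⟨w, hw⟩ hvw => by simpa only [hA _ v hv, hA _ w hw] using hsep n hvw⟩
  · rw [isClosed_closedBall.closure_eq]
    exact hsub l.length ⟨a :: l, rfl⟩
  · have hdiam : ∀ n, ediam (A (res σ n)) ≤ ENNReal.ofReal (2 * r n) := fun n => by
      rw [hA n _ (res_length σ n)]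
      refine ediam_le_of_forall_dist_le fun y hy z hz => ?_
      linarith [dist_triangle_right y z (c n ⟨res σ n, res_length σ n⟩), mem_closedBall.1 hy,
        mem_closedBall.1 hz]
    have h2r : Tendsto (fun n => ENNReal.ofReal (2 * r n)) atTop (𝓝 0) := by
      simpa using ENNReal.tendsto_ofReal (hr0.const_mul 2)
    exact tendsto_of_tendsto_of_tendsto_of_le_of_le tendsto_const_nhds h2r (fun _ => zero_le)
      hdiam

end PseudoMetric

lemma CantorScheme.exists_continuous_injective_forall_mem {β α : Type*} [TopologicalSpace β]
    [DiscreteTopology β] [PseudoMetricSpace α] [CompleteSpace α] {A : List β → Set α}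
    (hanti : ClosureAntitone A) (hdiam : VanishingDiam A) (hne : ∀ l, (A l).Nonempty)
    (hdisj : CantorScheme.Disjoint A) :
    ∃ f : (ℕ → β) → α, Continuous f ∧ Function.Injective f ∧ ∀ x n, f x ∈ A (res x n) := by
  have hdom := hanti.map_of_vanishingDiam hdiam hne
  exact ⟨fun x => (inducedMap A).2 ⟨x, hdom ▸ mem_univ x⟩,
    hdiam.map_continuous.comp (continuous_id.subtype_mk _),
    fun x y h => congrArg Subtype.val (hdisj.map_injective h), fun x n => map_mem _ n⟩

lemma preperfect_range_of_continuous_injective {β α : Type*} [TopologicalSpace β]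
    [DiscreteTopology β] [Nontrivial β] [TopologicalSpace α] {f : (ℕ → β) → α}
    (hf : Continuous f) (hinj : Function.Injective f) : Preperfect (range f) := by
  classical
  rw [preperfect_iff_nhds]
  rintro _ ⟨x, rfl⟩ U hU
  obtain ⟨_, ⟨y, n, rfl⟩, hxy, hsub⟩ :=
    (isTopologicalBasis_cylinders _).mem_nhds_iff.1 (hf.continuousAt hU)
  obtain ⟨b, hb⟩ := exists_ne (x n)
  refine ⟨f (Function.update x n b), ⟨hsub ?_, mem_range_self _⟩, hinj.ne fun h => hb ?_⟩
  · rw [← mem_cylinder_iff_eq.1 hxy]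
    exact update_mem_cylinder x n b
  · simpa using congrFun h n

section CompleteMetric

variable {G : Type*} [AddCommGroup G] [MetricSpace G] [CompleteSpace G] [IsTopologicalAddGroup G]

theorem exists_perfect_forall_sub_mem_of_antitone {W : ℕ → Set G} (hWo : ∀ n, IsOpen (W n))
    (hWd : ∀ n, Dense (W n)) (hW : Antitone W) (hW0 : ∀ n, (0 : G) ∉ W n) :
    ∃ P : Set G, P.Nonempty ∧ Perfect P ∧ ∀ x ∈ P, ∀ y ∈ P, x ≠ y → ∀ n, x - y ∈ W n := by
  obtain ⟨A, hanti, hdiam, hne, hsep⟩ := exists_cantorScheme_pairwise_sub_mem hWo hWd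
  have hdisj : CantorScheme.Disjoint A := fun l a b hab => disjoint_left.2 fun y hya hyb => by
    have hne : (⟨a :: l, rfl⟩ : List.Vector Bool (l.length + 1)) ≠ ⟨b :: l, rfl⟩ := fun h =>
      hab (List.head_eq_of_cons_eq (congrArg Subtype.val h))
    exact hW0 l.length (by simpa using hsep l.length hne y hya y hyb)
  obtain ⟨f, hfc, hfi, hfA⟩ :=
    CantorScheme.exists_continuous_injective_forall_mem hanti hdiam hne hdisj
  refine ⟨range f, range_nonempty f,
    ⟨(isCompact_range hfc).isClosed, preperfect_range_of_continuous_injective hfc hfi⟩, ?_⟩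
  rintro _ ⟨σ, rfl⟩ _ ⟨τ, rfl⟩ hfστ n
  have hστ : σ ≠ τ := ne_of_apply_ne f hfστ
  set m := max n (firstDiff σ τ)
  have hres : res σ (m + 1) ≠ res τ (m + 1) := fun h =>
    apply_firstDiff_ne hστ (res_eq_res.1 h (by omega))
  exact hW (le_max_left _ _) <| hsep m (i := ⟨_, res_length σ (m + 1)⟩)
    (j := ⟨_, res_length τ (m + 1)⟩) (fun h => hres (congrArg Subtype.val h)) _ (hfA σ (m + 1)) _
    (hfA τ (m + 1))

theorem exists_perfect_forall_sub_mem_of_mem_residual {s : Set G} (hs : s ∈ residual G)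
    (h0 : (0 : G) ∉ s) :
    ∃ P : Set G, P.Nonempty ∧ Perfect P ∧ ∀ x ∈ P, ∀ y ∈ P, x ≠ y → x - y ∈ s := by
  obtain ⟨t, hts, htG, htd⟩ := mem_residual.1 hs
  obtain ⟨U, hUo, rfl⟩ := htG.eq_iInter_nat
  set W : ℕ → Set G := fun n => (⋂ m ∈ Iic n, U m) \ {0}
  have hWo : ∀ n, IsOpen (W n) := fun n =>
    ((finite_Iic n).isOpen_biInter fun m _ => hUo m).sdiff isClosed_singleton
  have hW : Antitone W := fun a b hab =>
    sdiff_subset_sdiff_left (biInter_subset_biInter_left (Iic_subset_Iic.2 hab))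
  have htW : ∀ n, ⋂ m, U m ⊆ W n := fun n x hx =>
    ⟨mem_iInter₂.2 fun m _ => mem_iInter.1 hx m, fun h => h0 (hts (eq_of_mem_singleton h ▸ hx))⟩
  obtain ⟨P, hPne, hP, hPW⟩ := exists_perfect_forall_sub_mem_of_antitone hWo
    (fun n => htd.mono (htW n)) hW fun n h => h.2 rfl
  refine ⟨P, hPne, hP, fun x hx y hy hxy => hts (mem_iInter.2 fun m => ?_)⟩
  exact mem_iInter₂.1 (hPW x hx y hy hxy m).1 m (mem_Iic.2 le_rfl)

end CompleteMetric

/-- If `H` is a meager subgroup of an abelian Polish group `G`, then there is a nonempty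
perfect set `P ⊆ G` intersecting each coset of `H` in at most one point, i.e. `x - y ∉ H`
for all distinct `x, y ∈ P`. -/
theorem exists_perfect_partial_transversal {G : Type*} [AddCommGroup G] [TopologicalSpace G]
    [IsTopologicalAddGroup G] [PolishSpace G]
    (H : AddSubgroup G) (hH : IsMeagre (H : Set G)) :
    ∃ P : Set G, P.Nonempty ∧ Perfect P ∧
      ∀ x ∈ P, ∀ y ∈ P, x ≠ y → x - y ∉ H := by
  let := TopologicalSpace.upgradeIsCompletelyMetrizable G
  exact exists_perfect_forall_sub_mem_of_mem_residual hH (not_not_intro H.zero_mem)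
end

section
/- Every nontrivial separable real Banach space X, regarded as an additive Polish group, is the union of a Haar null set and a Haar meager set: there exist A, B ⊆ X with A Haar null, B Haar meager, and A ∪ B = X. -/
/-!
Choose a continuous functional `g` and a vector `v` with `g v = 1`, and split `ℝ` into the
Liouville numbers `L`, which are Lebesgue null, and their complement, which is meagre. Translates
of `g ⁻¹' S` are preimages of translates of `S`, and the segment `t ↦ t • v`, `t ∈ [0, 1]`, meets
`g ⁻¹' S` exactly in `S ∩ [0, 1]`. Hence the push-forward of Lebesgue measure on `[0, 1]` witnesses
that `g ⁻¹' L` is Haar null, and the segment itself witnesses that `g ⁻¹' Lᶜ` is Haar meager.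
-/

/-- A set `A` in an abelian Polish group `G` is *Haar meager* if there are a Borel set `B ⊇ A`,
a nonempty compact metrizable space `K` and a continuous map `f : K → G` such that
`f ⁻¹' (x + B)` is meager in `K` for every `x ∈ G`. -/
def IsAddHaarMeager {G : Type*} [AddGroup G] [TopologicalSpace G] (A : Set G) : Prop :=
  ∃ B : Set G, A ⊆ B ∧ @MeasurableSet G (borel G) B ∧
    ∃ (K : Type) (tK : TopologicalSpace K),
      @CompactSpace K tK ∧ @TopologicalSpace.MetrizableSpace K tK ∧ Nonempty K ∧
      ∃ f : K → G, @Continuous K G tK _ f ∧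
        ∀ x : G, @IsMeagre K tK (f ⁻¹' ((fun b => x + b) '' B))

/-- A set `A` in an abelian Polish group `G` is *Haar null* if there are a Borel set `B ⊇ A`
and a Borel probability measure `μ` on `G` such that `μ (x + B) = 0` for every `x ∈ G`. -/
def IsAddHaarNull {G : Type*} [AddGroup G] [TopologicalSpace G] (A : Set G) : Prop :=
  ∃ B : Set G, A ⊆ B ∧ @MeasurableSet G (borel G) B ∧
    ∃ μ : @MeasureTheory.Measure G (borel G),
      @MeasureTheory.IsProbabilityMeasure G (borel G) μ ∧
      ∀ x : G, μ ((fun b => x + b) '' B) = 0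

open Set MeasureTheory Topology
open scoped unitInterval

section Subspace

variable {X : Type*} [TopologicalSpace X] {s : Set X}

lemma IsNowhereDense.preimage_val (hs : s ⊆ closure (interior s)) {t : Set X}
    (ht : IsNowhereDense t) : IsNowhereDense ((↑) ⁻¹' t : Set s) := by
  rw [IsNowhereDense, eq_empty_iff_forall_notMem]
  intro a ha
  obtain ⟨U, hUsub, hUopen, haU⟩ := mem_interior.1 ha
  obtain ⟨V, hVopen, rfl⟩ := isOpen_induced_iff.1 hUopen
  have hV_closure : V ∩ s ⊆ closure t := fun y ⟨hyV, hys⟩ =>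
    continuous_subtype_val.closure_preimage_subset t (@hUsub ⟨y, hys⟩ hyV)
  obtain ⟨y, hyV, hys⟩ :=
    mem_closure_iff.1 (hs a.2) V hVopen (show (a : X) ∈ V from haU)
  have hy : y ∈ interior (closure t) :=
    interior_maximal (fun z hz => hV_closure ⟨hz.1, interior_subset hz.2⟩)
      (hVopen.inter isOpen_interior) ⟨hyV, hys⟩
  rwa [ht] at hy

lemma IsMeagre.preimage_val (hs : s ⊆ closure (interior s)) {t : Set X} (ht : IsMeagre t) :
    IsMeagre ((↑) ⁻¹' t : Set s) := by
  obtain ⟨T, hT, hTc, htT⟩ := isMeagre_iff_countable_union_isNowhereDense.1 ht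
  refine IsMeagre.mono ?_ (isMeagre_biUnion hTc fun u hu => ((hT u hu).preimage_val hs).isMeagre)
  intro a ha
  simpa using htT ha

end Subspace

section Functional

variable {X F : Type*} [AddCommGroup X] [Module ℝ X] [FunLike F X ℝ] [LinearMapClass F ℝ X ℝ]
  (g : F) {v : X}

lemma image_add_left_preimage (x : X) (S : Set ℝ) :
    (x + ·) '' (g ⁻¹' S) = g ⁻¹' ((-g x + ·) ⁻¹' S) := by
  ext y
  simp [image_add_left]

lemma preimage_smul_const_preimage (hv : g v = 1) (S : Set ℝ) :
    (fun t : ℝ => t • v) ⁻¹' (g ⁻¹' S) = S := by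
  ext t
  simp [hv]

end Functional

section HaarSmall

variable {X : Type*} [AddCommGroup X] [TopologicalSpace X] [Module ℝ X]
  [ContinuousSMul ℝ X] (g : X →L[ℝ] ℝ) {v : X}

lemma ContinuousLinearMap.isAddHaarNull_preimage (hv : g v = 1) {N : Set ℝ}
    (hN : MeasurableSet N) (hN0 : volume N = 0) : IsAddHaarNull (g ⁻¹' N) := by
  let : MeasurableSpace X := borel X
  have : BorelSpace X := ⟨rfl⟩
  have hseg : Measurable fun t : I => (t : ℝ) • v :=
    (continuous_subtype_val.smul continuous_const).measurable
  refine ⟨g ⁻¹' N, subset_rfl, g.continuous.measurable hN, volume.map fun t : I => (t : ℝ) • v,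
    Measure.isProbabilityMeasure_map hseg.aemeasurable, fun x => ?_⟩
  have hN' : MeasurableSet ((-g x + ·) ⁻¹' N) := measurable_const_add _ hN
  rw [image_add_left_preimage g, Measure.map_apply hseg (g.continuous.measurable hN'),
    show (fun t : I => (t : ℝ) • v) = (fun t : ℝ => t • v) ∘ (↑) from rfl, preimage_comp,
    preimage_smul_const_preimage g hv, unitInterval.volume_apply]
  refine measure_mono_null (image_preimage_subset _ _) ?_
  rwa [measure_preimage_add]

lemma ContinuousLinearMap.isAddHaarMeager_preimage (hv : g v = 1) {M : Set ℝ}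
    (hM : MeasurableSet M) (hM0 : IsMeagre M) : IsAddHaarMeager (g ⁻¹' M) := by
  let : MeasurableSpace X := borel X
  have : BorelSpace X := ⟨rfl⟩
  refine ⟨g ⁻¹' M, subset_rfl, g.continuous.measurable hM, I, inferInstance, inferInstance,
    inferInstance, inferInstance, fun t => (t : ℝ) • v,
    continuous_subtype_val.smul continuous_const, fun x => ?_⟩
  rw [image_add_left_preimage g,
    show (fun t : I => (t : ℝ) • v) = (fun t : ℝ => t • v) ∘ (↑) from rfl, preimage_comp,
    preimage_smul_const_preimage g hv]
  refine IsMeagre.preimage_val (by simp [closure_Ioo zero_ne_one]) ?_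
  exact hM0.preimage_of_isOpenMap (continuous_const_add _) (isOpenMap_add_left _)

end HaarSmall

theorem banach_union_haarNull_haarMeager_general {X : Type*} [NormedAddCommGroup X]
    [NormedSpace ℝ X] [Nontrivial X] :
    ∃ A B : Set X, IsAddHaarNull A ∧ IsAddHaarMeager B ∧ A ∪ B = Set.univ := by
  obtain ⟨v, hv0⟩ := exists_ne (0 : X)
  obtain ⟨g, hgv⟩ := SeparatingDual.exists_eq_one (R := ℝ) hv0
  have hL : MeasurableSet {x : ℝ | Liouville x} := IsGδ.setOfPred_liouville.measurableSet
  have hLc : IsMeagre {x : ℝ | Liouville x}ᶜ := by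
    rw [IsMeagre, compl_compl]
    exact eventually_residual_liouville
  refine ⟨g ⁻¹' {x | Liouville x}, g ⁻¹' {x | Liouville x}ᶜ,
    g.isAddHaarNull_preimage hgv hL volume_setOfPred_liouville,
    g.isAddHaarMeager_preimage hgv hL.compl hLc, ?_⟩
  rw [← preimage_union, union_compl_self, preimage_univ]

/-- Every nontrivial separable real Banach space, as an additive Polish group, is the union
of a Haar null set and a Haar meager set. -/
theorem banach_union_haarNull_haarMeager {X : Type*} [NormedAddCommGroup X]
    [NormedSpace ℝ X] [CompleteSpace X] [TopologicalSpace.SeparableSpace X] [Nontrivial X] :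
    ∃ A B : Set X, IsAddHaarNull A ∧ IsAddHaarMeager B ∧ A ∪ B = Set.univ :=
  banach_union_haarNull_haarMeager_general
end

section
/- The additive Polish group ℤ^ℕ (integer sequences with coordinatewise addition and the product topology) is the union of a Haar null set and a Haar meager set: there exist A, B ⊆ ℤ^ℕ with A Haar null, B Haar meager, and A ∪ B = ℤ^ℕ. -/
open MeasureTheory Filter Topology ProbabilityTheory
open scoped ENNReal

section Product

variable {X : ℕ → Type*}

theorem dense_iUnion_ge_preimage_eval [∀ n, TopologicalSpace (X n)] {s : ∀ n, Set (X n)}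
    (hs : ∀ n, (s n).Nonempty) (N : ℕ) :
    Dense (⋃ n ≥ N, (fun w : ∀ n, X n ↦ w n) ⁻¹' s n) := by
  choose a ha using hs
  intro w
  -- changing one far-away coordinate of `w` into `s` converges to `w` in the product topology
  have hlim : Tendsto (fun m ↦ Function.update w m (a m)) atTop (𝓝 w) :=
    tendsto_pi_nhds.2 fun i ↦ tendsto_const_nhds.congr' <|
      (eventually_gt_atTop i).mono fun m hm ↦ (Function.update_of_ne hm.ne _ _).symm
  refine mem_closure_of_tendsto hlim <| (eventually_ge_atTop N).mono fun m hm ↦ ?_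
  exact Set.mem_biUnion hm (by simpa using ha m)

theorem setOf_frequently_mem_mem_residual [∀ n, TopologicalSpace (X n)] {s : ∀ n, Set (X n)}
    (hs_open : ∀ n, IsOpen (s n)) (hs : ∀ n, (s n).Nonempty) :
    {w : ∀ n, X n | ∃ᶠ n in atTop, w n ∈ s n} ∈ residual (∀ n, X n) := by
  have hset : {w : ∀ n, X n | ∃ᶠ n in atTop, w n ∈ s n} =
      ⋂ N, ⋃ n ≥ N, (fun w : ∀ n, X n ↦ w n) ⁻¹' s n := by
    ext w
    simp [frequently_atTop]
  rw [hset, countable_iInter_mem]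
  exact fun N ↦ residual_of_dense_open
    (isOpen_biUnion fun n _ ↦ (hs_open n).preimage (continuous_apply n))
    (dense_iUnion_ge_preimage_eval hs N)

theorem infinitePi_setOf_frequently_mem_eq_zero [∀ n, MeasurableSpace (X n)]
    (μ : ∀ n, Measure (X n)) [∀ n, IsProbabilityMeasure (μ n)] {s : ∀ n, Set (X n)}
    (hs_meas : ∀ n, MeasurableSet (s n)) (hs : ∑' n, μ n (s n) ≠ ⊤) :
    Measure.infinitePi μ {w | ∃ᶠ n in atTop, w n ∈ s n} = 0 := by
  refine measure_setOfPred_frequently_eq_zero ?_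
  convert hs using 3 with n
  exact (measurePreserving_eval_infinitePi μ n).measure_preimage (hs_meas n).nullMeasurableSet

end Product

section HaarCriteria

variable {G K : Type*} [AddGroup G] [TopologicalSpace G] [MeasurableSpace G] [BorelSpace G]

theorem isAddHaarNull_of_measure_preimage [MeasurableAdd G] [MeasurableSpace K] {B : Set G}
    (hB : MeasurableSet B) (ν : Measure K) [IsProbabilityMeasure ν] {f : K → G}
    (hf : Measurable f) (h : ∀ x, ν (f ⁻¹' ((fun b ↦ x + b) '' B)) = 0) : IsAddHaarNull B := by
  rw [IsAddHaarNull, ← BorelSpace.measurable_eq]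
  refine ⟨B, subset_rfl, hB, ν.map f, Measure.isProbabilityMeasure_map hf.aemeasurable, fun x ↦ ?_⟩
  have hxB : MeasurableSet ((fun b ↦ x + b) '' B) := by
    rw [Set.image_add_left]
    exact measurable_const_add (-x) hB
  rw [Measure.map_apply hf hxB, h x]

theorem isAddHaarMeager_of_isMeagre_preimage {K : Type} [TopologicalSpace K] [CompactSpace K]
    [TopologicalSpace.MetrizableSpace K] [Nonempty K] {B : Set G} (hB : MeasurableSet B)
    {f : K → G} (hf : Continuous f) (h : ∀ x, IsMeagre (f ⁻¹' ((fun b ↦ x + b) '' B))) :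
    IsAddHaarMeager B := by
  rw [IsAddHaarMeager, ← BorelSpace.measurable_eq]
  exact ⟨B, subset_rfl, hB, K, inferInstance, inferInstance, inferInstance, inferInstance, f, hf, h⟩

end HaarCriteria

theorem uniformOn_univ_singleton {Ω : Type*} [MeasurableSpace Ω] [MeasurableSingletonClass Ω]
    [Fintype Ω] (a : Ω) : uniformOn Set.univ {a} = (Fintype.card Ω : ℝ≥0∞)⁻¹ := by
  rw [uniformOn_univ, Measure.count_singleton, one_div]

theorem ZMod.eq_intCast_iff_dvd_cast_sub {m : ℕ} (a : ZMod m) (c : ℤ) :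
    a = c ↔ (m : ℤ) ∣ a.cast - c := by
  rw [← ZMod.intCast_eq_intCast_iff_dvd_sub, ZMod.intCast_zmod_cast, eq_comm]

namespace IntSeq

def ofZModTwoPow (w : ∀ n : ℕ, ZMod (2 ^ n)) : ℕ → ℤ := fun n ↦ (w n).cast

noncomputable def uniformZModTwoPow : Measure (∀ n : ℕ, ZMod (2 ^ n)) :=
  Measure.infinitePi fun _ ↦ uniformOn Set.univ

instance : IsProbabilityMeasure uniformZModTwoPow := by
  unfold uniformZModTwoPow
  infer_instance

def oftenDivisible : Set (ℕ → ℤ) := {y | ∃ᶠ n in atTop, (2 : ℤ) ^ n ∣ y n}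

theorem continuous_ofZModTwoPow : Continuous ofZModTwoPow :=
  continuous_pi fun n ↦ continuous_of_discreteTopology.comp (continuous_apply n)

theorem measurable_ofZModTwoPow : Measurable ofZModTwoPow :=
  measurable_pi_lambda _ fun n ↦ measurable_of_countable _ |>.comp (measurable_pi_apply n)

theorem measurableSet_oftenDivisible : MeasurableSet oftenDivisible := by
  have hset : oftenDivisible = limsup (fun n ↦ {y : ℕ → ℤ | (2 : ℤ) ^ n ∣ y n}) atTop := by
    ext y
    rw [mem_limsup_iff_frequently_mem]
    rfl
  rw [hset]
  exact MeasurableSet.measurableSet_limsup fun n ↦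
    measurableSet_setOfPred.2 (Measurable.of_discrete.comp (measurable_pi_apply n))

theorem preimage_ofZModTwoPow_add_oftenDivisible (x : ℕ → ℤ) :
    ofZModTwoPow ⁻¹' ((fun b ↦ x + b) '' oftenDivisible) =
      {w | ∃ᶠ n in atTop, w n ∈ ({(x n : ZMod (2 ^ n))} : Set _)} := by
  ext w
  simp only [Set.image_add_left, Set.mem_preimage, oftenDivisible, Set.mem_ofPred_eq,
    Set.mem_singleton_iff]
  refine frequently_congr (.of_forall fun n ↦ ?_)
  rw [ZMod.eq_intCast_iff_dvd_cast_sub, Pi.add_apply, Pi.neg_apply, neg_add_eq_sub]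
  push_cast
  rfl

theorem uniformZModTwoPow_preimage_ofZModTwoPow_add_oftenDivisible (x : ℕ → ℤ) :
    uniformZModTwoPow (ofZModTwoPow ⁻¹' ((fun b ↦ x + b) '' oftenDivisible)) = 0 := by
  rw [preimage_ofZModTwoPow_add_oftenDivisible]
  refine infinitePi_setOf_frequently_mem_eq_zero _ (fun _ ↦ .of_discrete) ?_
  simp_rw [uniformOn_univ_singleton, ZMod.card, Nat.cast_pow, Nat.cast_ofNat, ENNReal.inv_pow,
    ENNReal.tsum_geometric, ENNReal.one_sub_inv_two, inv_inv]
  exact ENNReal.ofNat_ne_top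

theorem isMeagre_preimage_ofZModTwoPow_add_compl_oftenDivisible (x : ℕ → ℤ) :
    IsMeagre (ofZModTwoPow ⁻¹' ((fun b ↦ x + b) '' oftenDivisibleᶜ)) := by
  rw [Set.image_add_left, Set.preimage_compl, Set.preimage_compl, ← Set.image_add_left,
    preimage_ofZModTwoPow_add_oftenDivisible, IsMeagre, compl_compl]
  exact setOf_frequently_mem_mem_residual (fun _ ↦ isOpen_discrete _)
    (fun _ ↦ Set.singleton_nonempty _)

end IntSeq

open IntSeq in
/-- The additive Polish group `ℤ^ℕ` is the union of a Haar null set and a Haar meager set. -/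
theorem intSeq_union_haarNull_haarMeager :
    ∃ A B : Set (ℕ → ℤ), IsAddHaarNull A ∧ IsAddHaarMeager B ∧ A ∪ B = Set.univ :=
  ⟨oftenDivisible, oftenDivisibleᶜ,
    isAddHaarNull_of_measure_preimage measurableSet_oftenDivisible uniformZModTwoPow
      measurable_ofZModTwoPow uniformZModTwoPow_preimage_ofZModTwoPow_add_oftenDivisible,
    isAddHaarMeager_of_isMeagre_preimage measurableSet_oftenDivisible.compl continuous_ofZModTwoPow
      isMeagre_preimage_ofZModTwoPow_add_compl_oftenDivisible,
    Set.union_compl_self _⟩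
end

section
/- Let K be a nonempty set of permutations of ℕ such that for every n ∈ ℕ both sets {q(n) : q ∈ K} and {q⁻¹(n) : q ∈ K} are finite. Then there exists a permutation p of ℕ such that for every q ∈ K the permutation p ∘ q has an infinite cycle, i.e., there exists m ∈ ℕ whose orbit {(p ∘ q)^k (m) : k ∈ ℕ} is infinite. -/
/-!
Let `u = separatingSeq K` grow so fast that no `q ∈ K` maps a term `u i` to another term `u j`; the finiteness
hypotheses make this possible. Send every point `b = q (u (2i))` to an even-indexed term
`jump b` exceeding every `q'⁻¹ b` (`q' ∈ K`). Starting from `0 = u 0`, the orbit under `p * q`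
then stays among the even-indexed terms and increases strictly, provided `p` agrees with `jump`
on these points. Such a permutation exists because the odd-indexed terms lie outside both the
domain and the image of this partial map, so both complements are infinite.
-/

theorem Set.InjOn.exists_perm_eqOn {α : Type*} [Countable α] {f : α → α} {s : Set α}
    (hf : s.InjOn f) (hs : sᶜ.Infinite) (hfs : (f '' s)ᶜ.Infinite) :
    ∃ p : Equiv.Perm α, Set.EqOn p f s := by
  have := hs.to_subtype
  have := hfs.to_subtype
  obtain ⟨p, hp⟩ := Cardinal.extend_function ⟨s.domRestrict f, Set.injOn_iff_injective.1 hf⟩ <|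
    Cardinal.eq.1 <| by
      rw [Function.Embedding.coeFn_mk, Set.range_domRestrict, Cardinal.mk_eq_aleph0,
        Cardinal.mk_eq_aleph0]
  exact ⟨p, fun x hx => hp ⟨x, hx⟩⟩

theorem Function.strictMono_iterate_of_lt_map {α : Type*} [Preorder α] {σ : α → α} {s : Set α}
    (hσ : Set.MapsTo σ s s) (hlt : ∀ x ∈ s, x < σ x) {x : α} (hx : x ∈ s) :
    StrictMono fun k => σ^[k] x :=
  strictMono_nat_of_lt_succ fun k => by
    rw [Function.iterate_succ_apply']
    exact hlt _ (hσ.iterate k hx)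

namespace LocallyFinitePerms

open Equiv Function Set

variable (K : Set (Perm ℕ))

noncomputable def maxImage (n : ℕ) : ℕ := sSup ((fun q : Perm ℕ => q n) '' K)

noncomputable def maxPreimage (n : ℕ) : ℕ := sSup ((fun q : Perm ℕ => q.symm n) '' K)

noncomputable def separatingSeq : ℕ → ℕ
  | 0 => 0
  | n + 1 =>
    separatingSeq n + maxImage K (separatingSeq n) + maxPreimage K (separatingSeq n) + 1

-- `Nat.pair` makes `jump` injective while dominating `maxPreimage`.
noncomputable def jump (b : ℕ) : ℕ :=
  separatingSeq K (2 * (Nat.pair b (maxPreimage K b) + 1))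

def jumpDomain : Set ℕ := {b | ∃ q ∈ K, ∃ i, q (separatingSeq K (2 * i)) = b}

variable {K}

theorem apply_le_maxImage (hK : ∀ n : ℕ, ((fun q : Perm ℕ => q n) '' K).Finite) {q : Perm ℕ}
    (hq : q ∈ K) (n : ℕ) : q n ≤ maxImage K n :=
  le_csSup (hK n).bddAbove ⟨q, hq, rfl⟩

theorem symm_apply_le_maxPreimage (hK' : ∀ n : ℕ, ((fun q : Perm ℕ => q.symm n) '' K).Finite)
    {q : Perm ℕ} (hq : q ∈ K) (n : ℕ) : q.symm n ≤ maxPreimage K n :=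
  le_csSup (hK' n).bddAbove ⟨q, hq, rfl⟩

variable (K) in
theorem separatingSeq_strictMono : StrictMono (separatingSeq K) :=
  strictMono_nat_of_lt_succ fun n => by rw [separatingSeq]; omega

theorem apply_separatingSeq_ne (hK : ∀ n : ℕ, ((fun q : Perm ℕ => q n) '' K).Finite)
    (hK' : ∀ n : ℕ, ((fun q : Perm ℕ => q.symm n) '' K).Finite) {q : Perm ℕ} (hq : q ∈ K)
    {i j : ℕ} (hij : i ≠ j) : q (separatingSeq K i) ≠ separatingSeq K j := by
  have hmono := (separatingSeq_strictMono K).monotone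
  rcases hij.lt_or_gt with h | h
  · have hi : maxImage K (separatingSeq K i) < separatingSeq K (i + 1) := by
      rw [separatingSeq]; omega
    have hle := hmono (show i + 1 ≤ j from h)
    have hq_le := apply_le_maxImage hK hq (separatingSeq K i)
    omega
  · intro heq
    have hj : maxPreimage K (separatingSeq K j) < separatingSeq K (j + 1) := by
      rw [separatingSeq]; omega
    have hle := hmono (show j + 1 ≤ i from h)
    have hsymm : q.symm (separatingSeq K j) = separatingSeq K i := by
      rw [← heq, Equiv.symm_apply_apply]
    have hq_le := symm_apply_le_maxPreimage hK' hq (separatingSeq K j)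
    omega

variable (K) in
theorem jump_injective : Injective (jump K) := by
  refine (separatingSeq_strictMono K).injective.comp fun a b h => ?_
  have : Nat.pair a (maxPreimage K a) = Nat.pair b (maxPreimage K b) := by omega
  simpa using congrArg (fun n => n.unpair.1) this

theorem lt_jump_apply (hK' : ∀ n : ℕ, ((fun q : Perm ℕ => q.symm n) '' K).Finite)
    {q : Perm ℕ} (hq : q ∈ K) (x : ℕ) : x < jump K (q x) := by
  set m := Nat.pair (q x) (maxPreimage K (q x))
  calc x = q.symm (q x) := (q.symm_apply_apply x).symm
    _ ≤ maxPreimage K (q x) := symm_apply_le_maxPreimage hK' hq (q x)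
    _ ≤ m := Nat.right_le_pair _ _
    _ < 2 * (m + 1) := by omega
    _ ≤ jump K (q x) := (separatingSeq_strictMono K).id_le _

theorem exists_perm_eqOn_jump (hK : ∀ n : ℕ, ((fun q : Perm ℕ => q n) '' K).Finite)
    (hK' : ∀ n : ℕ, ((fun q : Perm ℕ => q.symm n) '' K).Finite) :
    ∃ p : Perm ℕ, EqOn p (jump K) (jumpDomain K) := by
  have hodd : Injective fun j => separatingSeq K (2 * j + 1) :=
    (separatingSeq_strictMono K).injective.comp fun a b h => by omega
  refine (jump_injective K).injOn.exists_perm_eqOn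
    (infinite_of_injective_forall_mem hodd fun j => ?_)
    (infinite_of_injective_forall_mem hodd fun j => ?_)
  · rintro ⟨q, hq, i, hi⟩
    exact apply_separatingSeq_ne hK hK' hq (by omega) hi
  · rintro ⟨b, -, hb⟩
    have := (separatingSeq_strictMono K).injective hb
    omega

theorem infinite_range_pow_apply_zero (hK' : ∀ n : ℕ, ((fun q : Perm ℕ => q.symm n) '' K).Finite)
    {p q : Perm ℕ} (hp : EqOn p (jump K) (jumpDomain K)) (hq : q ∈ K) :
    (range fun k => ((p * q) ^ k) 0).Infinite := by
  let evens := range fun i => separatingSeq K (2 * i)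
  have hp' : ∀ x ∈ evens, (p * q) x = jump K (q x) := by
    rintro _ ⟨i, rfl⟩
    exact hp ⟨q, hq, i, rfl⟩
  have hmaps : MapsTo (p * q) evens evens := fun x hx => by
    rw [hp' x hx]
    exact ⟨_, rfl⟩
  have hlt : ∀ x ∈ evens, x < (p * q) x := fun x hx => by
    rw [hp' x hx]
    exact lt_jump_apply hK' hq x
  simp only [Perm.coe_pow]
  exact infinite_range_of_injective
    (strictMono_iterate_of_lt_map hmaps hlt ⟨0, by simp [separatingSeq]⟩).injective

end LocallyFinitePerms

open LocallyFinitePerms in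
theorem exists_perm_comp_has_infinite_cycle_general (K : Set (Equiv.Perm ℕ))
    (hproj : ∀ n : ℕ, ((fun q : Equiv.Perm ℕ => q n) '' K).Finite)
    (hproj' : ∀ n : ℕ, ((fun q : Equiv.Perm ℕ => q.symm n) '' K).Finite) :
    ∃ p : Equiv.Perm ℕ, ∀ q ∈ K, ∃ m : ℕ,
      (Set.range fun k : ℕ => ((p * q) ^ k) m).Infinite := by
  obtain ⟨p, hp⟩ := exists_perm_eqOn_jump hproj hproj'
  exact ⟨p, fun q hq => ⟨0, infinite_range_pow_apply_zero hproj' hp hq⟩⟩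

/-- Let `K` be a nonempty set of permutations of `ℕ` all of whose coordinate projections and
inverse coordinate projections are finite. Then there is a permutation `p` such that for
every `q ∈ K` the composition `p ∘ q` has an infinite cycle: some point `m` has infinite
orbit under `p ∘ q`. -/
theorem exists_perm_comp_has_infinite_cycle (K : Set (Equiv.Perm ℕ)) (hKne : K.Nonempty)
    (hproj : ∀ n : ℕ, ((fun q : Equiv.Perm ℕ => q n) '' K).Finite)
    (hproj' : ∀ n : ℕ, ((fun q : Equiv.Perm ℕ => q.symm n) '' K).Finite) :
    ∃ p : Equiv.Perm ℕ, ∀ q ∈ K, ∃ m : ℕ,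
      (Set.range fun k : ℕ => ((p * q) ^ k) m).Infinite :=
  exists_perm_comp_has_infinite_cycle_general K hproj hproj'
end
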